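/- arXiv:1312.7400 — 16 statements merged into one kernel-verified Lean document; each statement's English description precedes it below -/
import Mathlib

section
/- Let R be a commutative ring with 1 and let τ be a symmetric relation on the set R^# of nonzero nonunits of R. If τ is divisive, then τ is refinable: every τ-refinement of a τ-factorization is again a τ-factorization. -/
/-!
Two factors of a refinement that come from different blocks divide two distinct factors `x τ y`
of the original factorization; divisivity on the right, symmetry, and divisivity again relate the
two factors themselves. Zero needs separate care: the only τ-factorization involving `0` is
`0 = u * 0`, whose refinement is the single block's τ-factorization of `0`.
-/

universe u

variable {R : Type u} [CommRing R]

/-- `a ∈ R^#`, i.e. `a` is a nonzero nonunit of `R`. -/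
def IsNnu (a : R) : Prop :=
  a ≠ 0 ∧ ¬IsUnit a

/-- `a ∼ b` iff `(a) = (b)`. -/
def RAssoc (a b : R) : Prop :=
  Ideal.span ({a} : Set R) = Ideal.span ({b} : Set R)

/-- `a ≈ b` iff `a = λ * b` for some unit `λ`. -/
def RSAssoc (a b : R) : Prop :=
  ∃ lam : Rˣ, a = (lam : R) * b

/-- `a ≅ b` iff `a ∼ b` and (`a = b = 0`, or whenever `a = r * b` then `r` is a unit). -/
def RVSAssoc (a b : R) : Prop :=
  RAssoc a b ∧ ((a = 0 ∧ b = 0) ∨ ∀ r : R, a = r * b → IsUnit r)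

/-- `a = u * a₁ ⋯ aₙ` (with `l = [a₁, …, aₙ]`) is a `τ`-factorization of `a`:
the list of factors is nonempty, all factors are nonunits, all factors are nonzero
except in the trivial `τ`-factorization `0 = u * 0` of `0`, and the factors are
pairwise related by `τ`. -/
def IsTauFact (τ : R → R → Prop) (u : Rˣ) (l : List R) (a : R) : Prop :=
  l ≠ [] ∧ (∀ x ∈ l, ¬IsUnit x) ∧ (∀ x ∈ l, x = 0 → l = [0]) ∧
    l.Pairwise τ ∧ a = (u : R) * l.prod

/-- `b` τ-divides `a`, i.e. `b` occurs as a factor in some τ-factorization of `a`. -/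
def TauDvd (τ : R → R → Prop) (b a : R) : Prop :=
  ∃ (u : Rˣ) (l : List R), IsTauFact τ u l a ∧ b ∈ l

/-- `a` is τ-irreducible: `a` is a nonunit and every τ-factorization of `a`
has a factor `∼ a`. -/
def TauIrreducible (τ : R → R → Prop) (a : R) : Prop :=
  ¬IsUnit a ∧ ∀ (u : Rˣ) (l : List R), IsTauFact τ u l a → ∃ x ∈ l, RAssoc a x

/-- `a` is τ-strongly irreducible: `a` is a nonunit and every τ-factorization of `a`
has a factor `≈ a`. -/
def TauSIrreducible (τ : R → R → Prop) (a : R) : Prop :=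
  ¬IsUnit a ∧ ∀ (u : Rˣ) (l : List R), IsTauFact τ u l a → ∃ x ∈ l, RSAssoc a x

/-- `a` is τ-m-irreducible: `a` is a nonunit and in every τ-factorization of `a`
every factor is `∼ a`. -/
def TauMIrreducible (τ : R → R → Prop) (a : R) : Prop :=
  ¬IsUnit a ∧ ∀ (u : Rˣ) (l : List R), IsTauFact τ u l a → ∀ x ∈ l, RAssoc a x

/-- `a` is τ-very strongly irreducible: `a` is a nonunit, `a ≅ a`, and `a` has
no nontrivial τ-factorizations. -/
def TauVSIrreducible (τ : R → R → Prop) (a : R) : Prop :=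
  ¬IsUnit a ∧ RVSAssoc a a ∧ ∀ (u : Rˣ) (l : List R), IsTauFact τ u l a → l.length = 1

/-- `R` is τ-atomic: every nonunit has a τ-factorization into τ-irreducible factors. -/
def TauAtomic (τ : R → R → Prop) : Prop :=
  ∀ a : R, ¬IsUnit a → ∃ (u : Rˣ) (l : List R),
    IsTauFact τ u l a ∧ ∀ x ∈ l, TauIrreducible τ x

/-- `τ` is refinable: replacing each factor of a τ-factorization by the factors of a
τ-factorization of it (absorbing the units into the leading unit) again yields a
τ-factorization. -/
def TauRefinable (τ : R → R → Prop) : Prop :=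
  ∀ (a : R) (u : Rˣ) (l : List R), IsTauFact τ u l a →
    ∀ L : List (Rˣ × List R),
      List.Forall₂ (fun x p => IsTauFact τ p.1 p.2 x) l L →
      IsTauFact τ (u * (L.map Prod.fst).prod) (L.map Prod.snd).flatten a

/-- `τ` is associate preserving. -/
def TauAssocPreserving (τ : R → R → Prop) : Prop :=
  ∀ a b b' : R, IsNnu b' → RAssoc b b' → τ a b → τ a b'

/-- `R` satisfies τ-ACCP: every ascending chain of principal ideals
`(a₀) ⊆ (a₁) ⊆ ⋯` with `a_{i+1} |_τ a_i` stabilizes. -/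
def TauACCP (τ : R → R → Prop) : Prop :=
  ∀ f : ℕ → R,
    (∀ i, Ideal.span ({f i} : Set R) ≤ Ideal.span ({f (i + 1)} : Set R)) →
    (∀ i, TauDvd τ (f (i + 1)) (f i)) →
    ∃ N : ℕ, ∀ i, N ≤ i → Ideal.span ({f i} : Set R) = Ideal.span ({f N} : Set R)

def TauDivisive (τ : R → R → Prop) : Prop :=
  ∀ a b b' : R, IsNnu b' → τ a b → b' ∣ b → τ a b'

namespace List.Forall₂

variable {α β : Type*} {r : α → β → Prop} {l₁ : List α} {l₂ : List β}

theorem exists_rel_of_mem_right (h : Forall₂ r l₁ l₂) {b : β} (hb : b ∈ l₂) :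
    ∃ a ∈ l₁, r a b := by
  induction h with
  | nil => simp at hb
  | cons hab _ ih =>
    rcases List.mem_cons.1 hb with rfl | hb
    · exact ⟨_, List.mem_cons_self, hab⟩
    · obtain ⟨a, ha, hr⟩ := ih hb
      exact ⟨a, List.mem_cons_of_mem _ ha, hr⟩

theorem pairwise {s : α → α → Prop} {t : β → β → Prop}
    (H : ∀ {a a' b b'}, r a b → r a' b' → s a a' → t b b') (h : Forall₂ r l₁ l₂)
    (hs : l₁.Pairwise s) : l₂.Pairwise t := by
  induction h with
  | nil => exact List.Pairwise.nil
  | cons hab h ih =>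
    rw [List.pairwise_cons] at hs ⊢
    refine ⟨fun b' hb' => ?_, ih hs.2⟩
    obtain ⟨a', ha', hr⟩ := h.exists_rel_of_mem_right hb'
    exact H hab hr (hs.1 a' ha')

end List.Forall₂

variable {τ : R → R → Prop}

namespace IsTauFact

variable {u : Rˣ} {l : List R} {a : R}

theorem units_mul (h : IsTauFact τ u l a) (v : Rˣ) : IsTauFact τ (v * u) l (v * a) := by
  obtain ⟨hne, hnu, hzero, hpw, rfl⟩ := h
  exact ⟨hne, hnu, hzero, hpw, by push_cast; ring⟩

theorem ne_zero_of_mem (h : IsTauFact τ u l a) (ha : a ≠ 0) {b : R} (hb : b ∈ l) : b ≠ 0 := by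
  rintro rfl
  exact ha (by rw [h.2.2.2.2, h.2.2.1 0 hb rfl]; simp)

end IsTauFact

namespace TauDvd

variable {b x : R}

theorem dvd (h : TauDvd τ b x) : b ∣ x := by
  obtain ⟨u, l, hfact, hb⟩ := h
  exact hfact.2.2.2.2 ▸ (List.dvd_prod hb).mul_left _

theorem isNnu (h : TauDvd τ b x) (hx : x ≠ 0) : IsNnu b := by
  obtain ⟨u, l, hfact, hb⟩ := h
  exact ⟨hfact.ne_zero_of_mem hx hb, hfact.2.1 b hb⟩

end TauDvd

theorem TauDivisive.rel_of_tauDvd (hdiv : TauDivisive τ) (hsym : ∀ a b, τ a b → τ b a)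
    {x y b c : R} (hxy : τ x y) (hx : x ≠ 0) (hy : y ≠ 0) (hbx : TauDvd τ b x)
    (hcy : TauDvd τ c y) :
    τ b c :=
  have hxc : τ x c := hdiv x y c (hcy.isNnu hy) hxy hcy.dvd
  hsym c b (hdiv c x b (hbx.isNnu hx) (hsym x c hxc) hbx.dvd)

section Refinement

variable {u : Rˣ} {l : List R} {a : R} {L : List (Rˣ × List R)}

theorem exists_tauDvd_of_mem_refinement
    (hL : List.Forall₂ (fun x p => IsTauFact τ p.1 p.2 x) l L) {b : R}
    (hb : b ∈ (L.map Prod.snd).flatten) : ∃ x ∈ l, TauDvd τ b x := by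
  obtain ⟨_, hm, hbm⟩ := List.mem_flatten.1 hb
  obtain ⟨p, hp, rfl⟩ := List.mem_map.1 hm
  obtain ⟨x, hx, hfact⟩ := hL.exists_rel_of_mem_right hp
  exact ⟨x, hx, p.1, p.2, hfact, hbm⟩

theorem refinement_ne_nil (hL : List.Forall₂ (fun x p => IsTauFact τ p.1 p.2 x) l L)
    (hl : l ≠ []) : (L.map Prod.snd).flatten ≠ [] := by
  obtain ⟨x, l', rfl⟩ := List.exists_cons_of_ne_nil hl
  rcases hL with _ | ⟨hp, _⟩
  rw [List.map_cons, List.flatten_cons]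
  exact fun h => hp.1 (List.append_eq_nil_iff.1 h).1

theorem prod_eq_prod_refinement (hL : List.Forall₂ (fun x p => IsTauFact τ p.1 p.2 x) l L) :
    l.prod = ((L.map Prod.fst).prod : R) * (L.map Prod.snd).flatten.prod := by
  induction hL with
  | nil => simp
  | cons hp _ ih =>
    simp only [List.map_cons, List.prod_cons, List.flatten_cons, List.prod_append, ih,
      hp.2.2.2.2, Units.val_mul]
    ring

theorem IsTauFact.refine_of_zero_mem (hfact : IsTauFact τ u l a)
    (hL : List.Forall₂ (fun x p => IsTauFact τ p.1 p.2 x) l L) (h0 : (0 : R) ∈ l) :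
    IsTauFact τ (u * (L.map Prod.fst).prod) (L.map Prod.snd).flatten a := by
  obtain rfl : l = [0] := hfact.2.2.1 0 h0 rfl
  rcases hL with _ | ⟨hp, ⟨⟩⟩
  simpa [hfact.2.2.2.2] using hp.units_mul u

theorem IsTauFact.refine_of_zero_not_mem (hdiv : TauDivisive τ) (hsym : ∀ a b, τ a b → τ b a)
    (hfact : IsTauFact τ u l a) (hL : List.Forall₂ (fun x p => IsTauFact τ p.1 p.2 x) l L)
    (h0 : (0 : R) ∉ l) :
    IsTauFact τ (u * (L.map Prod.fst).prod) (L.map Prod.snd).flatten a := by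
  obtain ⟨hne, -, -, hpw, rfl⟩ := hfact
  have hnnu (b : R) (hb : b ∈ (L.map Prod.snd).flatten) : IsNnu b := by
    obtain ⟨x, hx, hbx⟩ := exists_tauDvd_of_mem_refinement hL hb
    exact hbx.isNnu (ne_of_mem_of_not_mem hx h0)
  refine ⟨refinement_ne_nil hL hne, fun b hb => (hnnu b hb).2,
    fun b hb hb0 => absurd hb0 (hnnu b hb).1, List.pairwise_flatten.2 ⟨?_, ?_⟩, ?_⟩
  · intro m hm
    obtain ⟨p, hp, rfl⟩ := List.mem_map.1 hm
    obtain ⟨x, -, hfact⟩ := hL.exists_rel_of_mem_right hp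
    exact hfact.2.2.2.1
  · have hpw' : l.Pairwise fun x y => τ x y ∧ x ≠ 0 ∧ y ≠ 0 := hpw.imp_of_mem fun hx hy hxy =>
      ⟨hxy, ne_of_mem_of_not_mem hx h0, ne_of_mem_of_not_mem hy h0⟩
    refine List.pairwise_map.2 (hL.pairwise ?_ hpw')
    rintro x y p q hp hq ⟨hxy, hx, hy⟩ b hb c hc
    exact hdiv.rel_of_tauDvd hsym hxy hx hy ⟨p.1, p.2, hp, hb⟩ ⟨q.1, q.2, hq, hc⟩
  · rw [prod_eq_prod_refinement hL]
    push_cast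
    ring

end Refinement

theorem divisive_implies_refinable_general (τ : R → R → Prop)
    (hsym : ∀ a b : R, τ a b → τ b a)
    (hdiv : ∀ a b b' : R, IsNnu b' → τ a b → b' ∣ b → τ a b') :
    ∀ (a : R) (u : Rˣ) (l : List R), IsTauFact τ u l a →
      ∀ L : List (Rˣ × List R),
        List.Forall₂ (fun x p => IsTauFact τ p.1 p.2 x) l L →
        IsTauFact τ (u * (L.map Prod.fst).prod) (L.map Prod.snd).flatten a := by
  intro a u l hfact L hL
  by_cases h0 : (0 : R) ∈ l
  · exact hfact.refine_of_zero_mem hL h0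
  · exact hfact.refine_of_zero_not_mem hdiv hsym hL h0

/-- If `τ` (a symmetric relation on `R^#`) is divisive, then `τ` is refinable:
every τ-refinement of a τ-factorization is again a τ-factorization. -/
theorem divisive_implies_refinable (τ : R → R → Prop)
    (hτ : ∀ a b : R, τ a b → IsNnu a ∧ IsNnu b)
    (hsym : ∀ a b : R, τ a b → τ b a)
    (hdiv : ∀ a b b' : R, IsNnu b' → τ a b → b' ∣ b → τ a b') :
    ∀ (a : R) (u : Rˣ) (l : List R), IsTauFact τ u l a →
      ∀ L : List (Rˣ × List R),
        List.Forall₂ (fun x p => IsTauFact τ p.1 p.2 x) l L →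
        IsTauFact τ (u * (L.map Prod.fst).prod) (L.map Prod.snd).flatten a :=
  divisive_implies_refinable_general τ hsym hdiv
end

section
/- Let R be a commutative ring with 1 and let τ be a symmetric relation on the set R^# of nonzero nonunits of R. If τ is multiplicative, then τ is combinable: whenever λa₁⋯aₙ is a τ-factorization, so is λa₁⋯aᵢ₋₁(aᵢaᵢ₊₁)aᵢ₊₂⋯aₙ for each i. -/
universe u

variable {R : Type u} [CommRing R]

/-- If `τ` (a symmetric relation on `R^#`) is multiplicative, then `τ` is combinable:
whenever `u * (l₁ ++ x :: y :: l₂)` is a τ-factorization of `a`, so is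
`u * (l₁ ++ (x * y) :: l₂)`. -/
theorem multiplicative_implies_combinable (τ : R → R → Prop)
    (hτ : ∀ a b : R, τ a b → IsNnu a ∧ IsNnu b)
    (hsym : ∀ a b : R, τ a b → τ b a)
    (hmul : ∀ a b c : R, τ a b → τ a c → τ a (b * c)) :
    ∀ (a : R) (u : Rˣ) (l₁ l₂ : List R) (x y : R),
      IsTauFact τ u (l₁ ++ x :: y :: l₂) a →
      IsTauFact τ u (l₁ ++ x * y :: l₂) a := by
  intro a u l₁ l₂ x y h
  obtain ⟨-, hnu, hz, hp, hprod⟩ := h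
  rw [List.pairwise_append] at hp
  obtain ⟨hp1, hp2, hp12⟩ := hp
  rw [List.pairwise_cons] at hp2
  obtain ⟨hx, hp2⟩ := hp2
  rw [List.pairwise_cons] at hp2
  obtain ⟨hy, hp2⟩ := hp2
  have hxy : τ x y := hx y (by simp)
  -- every element of l₁ is τ-related to x*y, and x*y is τ-related to every element of l₂
  have h1 : ∀ z ∈ l₁, τ z (x * y) := fun z hzmem =>
    hmul z x y (hp12 z hzmem x (by simp)) (hp12 z hzmem y (by simp))
  have h2 : ∀ z ∈ l₂, τ (x * y) z := fun z hzmem =>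
    hsym _ _ (hmul z x y (hsym _ _ (hx z (by simp [hzmem]))) (hsym _ _ (hy z hzmem)))
  refine ⟨by simp, ?_, ?_, ?_, ?_⟩
  · intro z hzmem
    rcases List.mem_append.1 hzmem with h' | h'
    · exact hnu z (by simp [h'])
    · rcases List.mem_cons.1 h' with h' | h'
      · subst h'
        intro hu
        exact (hτ x y hxy).1.2 (isUnit_of_mul_isUnit_left hu)
      · exact hnu z (by simp [h'])
  · -- zero condition
    have hlong : l₁ ++ x :: y :: l₂ ≠ [0] := by
      intro he
      have := congrArg List.length he
      simp at this
      omega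
    intro z hzmem hz0
    rcases List.mem_append.1 hzmem with h' | h'
    · exact absurd (hz z (by simp [h']) hz0) hlong
    · rcases List.mem_cons.1 h' with h' | h'
      · subst h'
        -- x*y = 0; need l₁ = [] and l₂ = []
        rcases List.eq_nil_or_concat l₁ with rfl | ⟨l', w, rfl⟩
        · rcases l₂ with _ | ⟨w, l'⟩
          · simp [hz0]
          · exact absurd hz0 (hτ _ w (h2 w (by simp))).1.1
        · exact absurd hz0 (hτ w _ (h1 w (by simp))).2.1
      · exact absurd (hz z (by simp [h']) hz0) hlong
  · rw [List.pairwise_append, List.pairwise_cons]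
    exact ⟨hp1, ⟨h2, hp2⟩, fun z hzm w hwm => by
      rcases List.mem_cons.1 hwm with h' | h'
      · exact h' ▸ h1 z hzm
      · exact hp12 z hzm w (by simp [h'])⟩
  · rw [hprod]; simp [mul_assoc]
end

section
/- Let R be a commutative ring with 1, τ a symmetric relation on R^#, and a ∈ R a nonunit. Consider: (1) every τ-factorization a = λa₁⋯aₙ has a ∼ aᵢ for some i; (2) whenever (a) = (a₁)⋯(aₙ) with each aᵢ ∈ R^# and aᵢ τ aⱼ for all i ≠ j, then (a) = (aᵢ) for some i; (3) whenever a ∼ a₁⋯aₙ with each aᵢ ∈ R^# and aᵢ τ aⱼ for all i ≠ j, then a ∼ aᵢ for some i. Then (2) ⇔ (3) ⇒ (1), and if R is a strongly associate ring then (1) ⇒ (2). -/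
universe u

variable {R : Type u} [CommRing R]

lemma span_list_prod_aux (l : List R) :
    (l.map fun x => Ideal.span ({x} : Set R)).prod = Ideal.span ({l.prod} : Set R) := by
  induction l with
  | nil => simp
  | cons h t ih => simp [ih, Ideal.span_singleton_mul_span_singleton]

/-- For `a` a nonunit, consider
(1) every τ-factorization of `a` has a factor `∼ a`;
(2) whenever `(a) = (a₁)⋯(aₙ)` with each `aᵢ ∈ R^#` and `aᵢ τ aⱼ` for `i ≠ j`,
    then `(a) = (aᵢ)` for some `i`;
(3) whenever `a ∼ a₁⋯aₙ` with each `aᵢ ∈ R^#` and `aᵢ τ aⱼ` for `i ≠ j`,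
    then `a ∼ aᵢ` for some `i`.
Then (2) ⇔ (3) ⇒ (1), and if `R` is strongly associate then (1) ⇒ (2). -/
theorem tau_irreducible_conditions (τ : R → R → Prop)
    (hτ : ∀ a b : R, τ a b → IsNnu a ∧ IsNnu b)
    (hsym : ∀ a b : R, τ a b → τ b a)
    (a : R) (ha : ¬IsUnit a) :
    ((∀ l : List R, l ≠ [] → (∀ x ∈ l, IsNnu x) → l.Pairwise τ →
        Ideal.span ({a} : Set R) = (l.map fun x => Ideal.span ({x} : Set R)).prod →
        ∃ x ∈ l, RAssoc a x) ↔
      (∀ l : List R, l ≠ [] → (∀ x ∈ l, IsNnu x) → l.Pairwise τ →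
        RAssoc a l.prod → ∃ x ∈ l, RAssoc a x)) ∧
    ((∀ l : List R, l ≠ [] → (∀ x ∈ l, IsNnu x) → l.Pairwise τ →
        Ideal.span ({a} : Set R) = (l.map fun x => Ideal.span ({x} : Set R)).prod →
        ∃ x ∈ l, RAssoc a x) →
      ∀ (u : Rˣ) (l : List R), IsTauFact τ u l a → ∃ x ∈ l, RAssoc a x) ∧
    ((∀ x y : R, RAssoc x y → RSAssoc x y) →
      (∀ (u : Rˣ) (l : List R), IsTauFact τ u l a → ∃ x ∈ l, RAssoc a x) →
      ∀ l : List R, l ≠ [] → (∀ x ∈ l, IsNnu x) → l.Pairwise τ →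
        Ideal.span ({a} : Set R) = (l.map fun x => Ideal.span ({x} : Set R)).prod →
        ∃ x ∈ l, RAssoc a x) := by
  have key : ∀ l : List R,
      (Ideal.span ({a} : Set R) = (l.map fun x => Ideal.span ({x} : Set R)).prod) ↔
      RAssoc a l.prod := by
    intro l
    rw [span_list_prod_aux]
    rfl
  refine ⟨?_, ?_, ?_⟩
  · constructor
    · intro h l hne hnnu hpw hr
      exact h l hne hnnu hpw ((key l).mpr hr)
    · intro h l hne hnnu hpw hr
      exact h l hne hnnu hpw ((key l).mp hr)
  · intro h u l hf
    obtain ⟨hne, hnu, hz, hpw, heq⟩ := hf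
    by_cases h0 : l = [0]
    · subst h0
      refine ⟨0, by simp, ?_⟩
      have : a = 0 := by simpa using heq
      rw [this]
      rfl
    · have hnnu : ∀ x ∈ l, IsNnu x := fun x hx =>
        ⟨fun hx0 => h0 (hz x hx hx0), hnu x hx⟩
      refine h l hne hnnu hpw ?_
      rw [key]
      show Ideal.span _ = _
      rw [heq, Ideal.span_singleton_mul_left_unit u.isUnit]
  · intro hsa h l hne hnnu hpw hr
    have hra : RAssoc a l.prod := (key l).mp hr
    obtain ⟨u, hu⟩ := hsa a l.prod hra
    exact h u l ⟨hne, fun x hx => (hnnu x hx).2,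
      fun x hx hx0 => absurd hx0 (hnnu x hx).1, hpw, hu⟩
end

section
/- Let R be a commutative ring with 1 and τ a symmetric relation on R^#. If a is τ-irreducible and a' ≈ a (a' is a strong associate of a), then a' is τ-irreducible. -/
universe u

variable {R : Type u} [CommRing R]

/-- A strong associate of a τ-irreducible element is τ-irreducible. -/
theorem tauIrreducible_of_strong_associate (τ : R → R → Prop)
    (hτ : ∀ a b : R, τ a b → IsNnu a ∧ IsNnu b)
    (hsym : ∀ a b : R, τ a b → τ b a)
    (a a' : R) (ha : TauIrreducible τ a) (haa' : RSAssoc a' a) :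
    TauIrreducible τ a' := by
  obtain ⟨lam, rfl⟩ := haa'
  obtain ⟨hanu, hfac⟩ := ha
  constructor
  · intro h
    exact hanu (isUnit_of_mul_isUnit_right h)
  · intro u l hl
    have ha' : a = (lam⁻¹ * u : Rˣ) * l.prod := by
      have h := hl.2.2.2.2
      have h2 : ((lam⁻¹ : Rˣ) : R) * ((lam : R) * a) = ((lam⁻¹ : Rˣ) : R) * ((u : R) * l.prod) := by
        rw [h]
      simpa [← mul_assoc, Units.mul_inv_cancel_left] using h2
    obtain ⟨x, hx, hax⟩ := hfac (lam⁻¹ * u) l ⟨hl.1, hl.2.1, hl.2.2.1, hl.2.2.2.1, ha'⟩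
    refine ⟨x, hx, ?_⟩
    have hspan : Ideal.span ({(lam : R) * a} : Set R) = Ideal.span ({a} : Set R) := by
      apply le_antisymm
      · exact Ideal.span_singleton_le_span_singleton.mpr ⟨(lam : R), mul_comm _ _⟩
      · exact Ideal.span_singleton_le_span_singleton.mpr
          ⟨((lam⁻¹ : Rˣ) : R), by rw [mul_comm]; simp [← mul_assoc]⟩
    exact hspan.trans hax
end

section
/- Let R be a commutative ring with 1, τ a symmetric relation on R^#, and a ∈ R a nonunit. Consider: (1) (a) is maximal in the set S' = {(b) : b a nonunit of R with b |_τ a}; (2) every τ-factorization a = λa₁⋯aₙ has a ∼ aᵢ for all i; (3) every τ-factorization a = λa₁⋯aₙ has a ≈ aᵢ for all i. Then (3) ⇒ (1) ⇔ (2), and if R is a strongly associate ring then (2) ⇒ (3). -/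
universe u

variable {R : Type u} [CommRing R]

/-- For `a` a nonunit, consider
(1) `(a)` is maximal in `S' = {(b) : b a nonunit of R with b |_τ a}`;
(2) every τ-factorization of `a` has all factors `∼ a`;
(3) every τ-factorization of `a` has all factors `≈ a`. -/
lemma tauDvd_self' (τ : R → R → Prop) (a : R) (ha : ¬IsUnit a) : TauDvd τ a a := by
  refine ⟨1, [a], ⟨by simp, by simpa using ha, ?_, by simp, by simp⟩, by simp⟩
  intro x hx h0
  simp only [List.mem_singleton] at hx
  subst hx; simp [h0]

lemma span_le_of_mem_fact {τ : R → R → Prop} {u : Rˣ} {l : List R} {a x : R}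
    (h : IsTauFact τ u l a) (hx : x ∈ l) :
    Ideal.span ({a} : Set R) ≤ Ideal.span ({x} : Set R) := by
  rw [Ideal.span_singleton_le_span_singleton]
  rw [h.2.2.2.2]
  exact (List.dvd_prod hx).mul_left u

lemma rsassoc_span {a b : R} (h : RSAssoc a b) :
    Ideal.span ({a} : Set R) = Ideal.span ({b} : Set R) := by
  obtain ⟨lam, rfl⟩ := h
  refine le_antisymm ?_ ?_ <;> rw [Ideal.span_singleton_le_span_singleton]
  · exact Dvd.intro_left _ rfl
  · exact ⟨(lam⁻¹ : Rˣ), by simp [mul_comm, mul_assoc]⟩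

/-- For `a` a nonunit, consider
(1) `(a)` is maximal in `S' = {(b) : b a nonunit of R with b |_τ a}`;
(2) every τ-factorization of `a` has all factors `∼ a`;
(3) every τ-factorization of `a` has all factors `≈ a`.
Then (3) ⇒ (1) ⇔ (2), and if `R` is strongly associate then (2) ⇒ (3). -/
theorem tau_m_irreducible_conditions (τ : R → R → Prop)
    (hτ : ∀ a b : R, τ a b → IsNnu a ∧ IsNnu b)
    (hsym : ∀ a b : R, τ a b → τ b a)
    (a : R) (ha : ¬IsUnit a) :
    ((∀ (u : Rˣ) (l : List R), IsTauFact τ u l a → ∀ x ∈ l, RSAssoc a x) →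
      ((∃ b : R, ¬IsUnit b ∧ TauDvd τ b a ∧
          Ideal.span ({b} : Set R) = Ideal.span ({a} : Set R)) ∧
        ∀ b : R, ¬IsUnit b → TauDvd τ b a →
          Ideal.span ({a} : Set R) ≤ Ideal.span ({b} : Set R) →
          Ideal.span ({a} : Set R) = Ideal.span ({b} : Set R))) ∧
    (((∃ b : R, ¬IsUnit b ∧ TauDvd τ b a ∧
          Ideal.span ({b} : Set R) = Ideal.span ({a} : Set R)) ∧
        ∀ b : R, ¬IsUnit b → TauDvd τ b a →
          Ideal.span ({a} : Set R) ≤ Ideal.span ({b} : Set R) →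
          Ideal.span ({a} : Set R) = Ideal.span ({b} : Set R)) ↔
      (∀ (u : Rˣ) (l : List R), IsTauFact τ u l a → ∀ x ∈ l, RAssoc a x)) ∧
    ((∀ x y : R, RAssoc x y → RSAssoc x y) →
      (∀ (u : Rˣ) (l : List R), IsTauFact τ u l a → ∀ x ∈ l, RAssoc a x) →
      ∀ (u : Rˣ) (l : List R), IsTauFact τ u l a → ∀ x ∈ l, RSAssoc a x) := by
  refine ⟨?_, ⟨?_, ?_⟩, ?_⟩
  · intro h3
    refine ⟨⟨a, ha, tauDvd_self' τ a ha, rfl⟩, ?_⟩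
    intro b hb ⟨u, l, hf, hbl⟩ _
    exact rsassoc_span (h3 u l hf b hbl)
  · rintro ⟨_, hmax⟩ u l hf x hxl
    exact hmax x (hf.2.1 x hxl) ⟨u, l, hf, hxl⟩ (span_le_of_mem_fact hf hxl)
  · intro h2
    refine ⟨⟨a, ha, tauDvd_self' τ a ha, rfl⟩, ?_⟩
    intro b hb ⟨u, l, hf, hbl⟩ _
    exact h2 u l hf b hbl
  · intro hsa h2 u l hf x hxl
    exact hsa a x (h2 u l hf x hxl)
end

section
/- Let R be a commutative ring with 1, τ a symmetric relation on R^#, and a ∈ R a nonunit with a ≅ a. The following are equivalent: (1) every τ-factorization a = λa₁⋯aₙ has a ≅ aᵢ for some i; (2) whenever a ≅ a₁⋯aₙ with each aᵢ ∈ R^# and aᵢ τ aⱼ for all i ≠ j, then a ≅ aᵢ for some i; (3) whenever a ∼ a₁⋯aₙ with each aᵢ ∈ R^# and aᵢ τ aⱼ for all i ≠ j, then a ∼ aᵢ for some i; (4) a has no nontrivial τ-factorizations. -/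
universe u

variable {R : Type u} [CommRing R]

lemma rassoc_key {a b : R} (haa : RVSAssoc a a) (h : RAssoc a b) :
    RVSAssoc a b := by
  refine ⟨h, ?_⟩
  by_cases ha0 : a = 0
  · left
    refine ⟨ha0, ?_⟩
    have hb : b ∈ Ideal.span ({a} : Set R) := by
      rw [h]; exact Ideal.mem_span_singleton_self b
    rw [ha0] at hb
    have := Ideal.mem_span_singleton.mp hb
    simpa [zero_dvd_iff] using this
  · right
    intro r hr
    have hb : b ∈ Ideal.span ({a} : Set R) := by
      rw [h]; exact Ideal.mem_span_singleton_self b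
    obtain ⟨s, hs⟩ := Ideal.mem_span_singleton.mp hb
    have hau : ∀ t : R, a = t * a → IsUnit t := by
      rcases haa.2 with h0 | h'
      · exact absurd h0.1 ha0
      · exact h'
    have hrs : a = (r * s) * a := by
      conv_lhs => rw [hr, hs]
      ring
    exact isUnit_of_mul_isUnit_left (hau _ hrs)

lemma rassoc_key2 {a b : R} (haa : RVSAssoc a a) (h : RAssoc a b) :
    ∃ u : Rˣ, a = (u : R) * b := by
  have hvs := rassoc_key haa h
  rcases hvs.2 with ⟨ha0, hb0⟩ | h'
  · exact ⟨1, by simp [ha0, hb0]⟩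
  · have hab : a ∈ Ideal.span ({b} : Set R) := by
      rw [← h]; exact Ideal.mem_span_singleton_self a
    obtain ⟨r, hr⟩ := Ideal.mem_span_singleton.mp hab
    have hr' : a = r * b := by rw [hr]; ring
    obtain ⟨u, hu⟩ := h' r hr'
    exact ⟨u, by rw [hr', hu]⟩

lemma rassoc_of_unit_mul {a b : R} (u : Rˣ) (h : a = (u : R) * b) :
    RAssoc a b := by
  apply le_antisymm <;> rw [Ideal.span_singleton_le_span_singleton]
  · exact ⟨(u : R), by rw [h]; ring⟩
  · exact ⟨((u⁻¹ : Rˣ) : R), by rw [h, mul_right_comm, Units.mul_inv, one_mul]⟩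

/-- For `a` a nonunit with `a ≅ a`, the following are equivalent:
(1) every τ-factorization of `a` has a factor `≅ a`;
(2) whenever `a ≅ a₁⋯aₙ` with each `aᵢ ∈ R^#` and `aᵢ τ aⱼ` for `i ≠ j`,
    then `a ≅ aᵢ` for some `i`;
(3) whenever `a ∼ a₁⋯aₙ` with each `aᵢ ∈ R^#` and `aᵢ τ aⱼ` for `i ≠ j`,
    then `a ∼ aᵢ` for some `i`;
(4) `a` has no nontrivial τ-factorizations. -/
theorem tau_very_strongly_irreducible_conditions (τ : R → R → Prop)
    (hτ : ∀ a b : R, τ a b → IsNnu a ∧ IsNnu b)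
    (hsym : ∀ a b : R, τ a b → τ b a)
    (a : R) (ha : ¬IsUnit a) (haa : RVSAssoc a a) :
    ((∀ (u : Rˣ) (l : List R), IsTauFact τ u l a → ∃ x ∈ l, RVSAssoc a x) ↔
      (∀ l : List R, l ≠ [] → (∀ x ∈ l, IsNnu x) → l.Pairwise τ →
        RVSAssoc a l.prod → ∃ x ∈ l, RVSAssoc a x)) ∧
    ((∀ l : List R, l ≠ [] → (∀ x ∈ l, IsNnu x) → l.Pairwise τ →
        RVSAssoc a l.prod → ∃ x ∈ l, RVSAssoc a x) ↔
      (∀ l : List R, l ≠ [] → (∀ x ∈ l, IsNnu x) → l.Pairwise τ →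
        RAssoc a l.prod → ∃ x ∈ l, RAssoc a x)) ∧
    ((∀ l : List R, l ≠ [] → (∀ x ∈ l, IsNnu x) → l.Pairwise τ →
        RAssoc a l.prod → ∃ x ∈ l, RAssoc a x) ↔
      (∀ (u : Rˣ) (l : List R), IsTauFact τ u l a → l.length = 1)) := by
  -- (1) → (2)
  have h12 : (∀ (u : Rˣ) (l : List R), IsTauFact τ u l a → ∃ x ∈ l, RVSAssoc a x) →
      (∀ l : List R, l ≠ [] → (∀ x ∈ l, IsNnu x) → l.Pairwise τ →
        RVSAssoc a l.prod → ∃ x ∈ l, RVSAssoc a x) := by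
    intro h1 l hl hnnu hpw hvs
    obtain ⟨u, hu⟩ := rassoc_key2 haa hvs.1
    exact h1 u l ⟨hl, fun x hx => (hnnu x hx).2,
      fun x hx hx0 => absurd hx0 (hnnu x hx).1, hpw, hu⟩
  -- (2) → (1)
  have h21 : (∀ l : List R, l ≠ [] → (∀ x ∈ l, IsNnu x) → l.Pairwise τ →
        RVSAssoc a l.prod → ∃ x ∈ l, RVSAssoc a x) →
      (∀ (u : Rˣ) (l : List R), IsTauFact τ u l a → ∃ x ∈ l, RVSAssoc a x) := by
    intro h2 u l hfact
    obtain ⟨hl, hnu, h0, hpw, hu⟩ := hfact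
    by_cases hz : (0 : R) ∈ l
    · have hl0 : l = [0] := h0 0 hz rfl
      refine ⟨0, by simp [hl0], ?_⟩
      have ha0 : a = 0 := by rw [hu, hl0]; simp
      exact ⟨by rw [ha0]; rfl, Or.inl ⟨ha0, rfl⟩⟩
    · have hnnu : ∀ x ∈ l, IsNnu x := fun x hx =>
        ⟨fun hx0 => hz (hx0 ▸ hx), hnu x hx⟩
      exact h2 l hl hnnu hpw (rassoc_key haa (rassoc_of_unit_mul u hu))
  -- (2) → (3)
  have h23 : (∀ l : List R, l ≠ [] → (∀ x ∈ l, IsNnu x) → l.Pairwise τ →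
        RVSAssoc a l.prod → ∃ x ∈ l, RVSAssoc a x) →
      (∀ l : List R, l ≠ [] → (∀ x ∈ l, IsNnu x) → l.Pairwise τ →
        RAssoc a l.prod → ∃ x ∈ l, RAssoc a x) := by
    intro h2 l hl hn hp hr
    obtain ⟨x, hx, hvs⟩ := h2 l hl hn hp (rassoc_key haa hr)
    exact ⟨x, hx, hvs.1⟩
  -- (3) → (2)
  have h32 : (∀ l : List R, l ≠ [] → (∀ x ∈ l, IsNnu x) → l.Pairwise τ →
        RAssoc a l.prod → ∃ x ∈ l, RAssoc a x) →
      (∀ l : List R, l ≠ [] → (∀ x ∈ l, IsNnu x) → l.Pairwise τ →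
        RVSAssoc a l.prod → ∃ x ∈ l, RVSAssoc a x) := by
    intro h3 l hl hn hp hvs
    obtain ⟨x, hx, hr⟩ := h3 l hl hn hp hvs.1
    exact ⟨x, hx, rassoc_key haa hr⟩
  -- (3) → (4)
  have h34 : (∀ l : List R, l ≠ [] → (∀ x ∈ l, IsNnu x) → l.Pairwise τ →
        RAssoc a l.prod → ∃ x ∈ l, RAssoc a x) →
      (∀ (u : Rˣ) (l : List R), IsTauFact τ u l a → l.length = 1) := by
    intro h3 u l hfact
    obtain ⟨hl, hnu, h0, hpw, hu⟩ := hfact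
    by_cases hz : (0 : R) ∈ l
    · rw [h0 0 hz rfl]; rfl
    · have hnnu : ∀ x ∈ l, IsNnu x := fun x hx =>
        ⟨fun hx0 => hz (hx0 ▸ hx), hnu x hx⟩
      obtain ⟨x, hx, hrx⟩ := h3 l hl hnnu hpw (rassoc_of_unit_mul u hu)
      by_contra hlen
      classical
      -- get another element y of l.erase x
      have hpos : 0 < (l.erase x).length := by
        rw [List.length_erase_of_mem hx]
        have : 1 ≤ l.length := List.length_pos_iff.mpr hl
        omega
      obtain ⟨y, hy⟩ := List.exists_mem_of_length_pos hpos
      -- a ≠ 0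
      have ha0 : a ≠ 0 := by
        intro h
        have hax : a ∣ x := by
          have := (hrx ▸ Ideal.mem_span_singleton_self x : x ∈ Ideal.span ({a} : Set R))
          exact Ideal.mem_span_singleton.mp this
        obtain ⟨s, hs⟩ := hax
        exact (hnnu x hx).1 (by rw [hs, h, zero_mul])
      have hau : ∀ t : R, a = t * a → IsUnit t := by
        rcases haa.2 with h0' | h'
        · exact absurd h0'.1 ha0
        · exact h'
      -- x = a * s
      obtain ⟨s, hs⟩ := Ideal.mem_span_singleton.mp
        ((hrx ▸ Ideal.mem_span_singleton_self x : x ∈ Ideal.span ({a} : Set R)))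
      -- l.prod = x * (l.erase x).prod
      have hprod : x * (l.erase x).prod = l.prod := List.prod_erase hx
      have key : a = ((u : R) * s * (l.erase x).prod) * a := by
        calc a = (u : R) * (x * (l.erase x).prod) := by rw [hprod]; exact hu
        _ = (u : R) * ((a * s) * (l.erase x).prod) := by rw [← hs]
        _ = ((u : R) * s * (l.erase x).prod) * a := by ring
      have hcunit : IsUnit ((l.erase x).prod) :=
        isUnit_of_mul_isUnit_right (hau _ key)
      have hyerase : y * ((l.erase x).erase y).prod = (l.erase x).prod :=
        List.prod_erase hy
      rw [← hyerase] at hcunit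
      exact (hnnu y (List.mem_of_mem_erase hy)).2
        (isUnit_of_mul_isUnit_left hcunit)
  -- (4) → (3)
  have h43 : (∀ (u : Rˣ) (l : List R), IsTauFact τ u l a → l.length = 1) →
      (∀ l : List R, l ≠ [] → (∀ x ∈ l, IsNnu x) → l.Pairwise τ →
        RAssoc a l.prod → ∃ x ∈ l, RAssoc a x) := by
    intro h4 l hl hn hp hr
    obtain ⟨u, hu⟩ := rassoc_key2 haa hr
    have hlen := h4 u l ⟨hl, fun x hx => (hn x hx).2,
      fun x hx hx0 => absurd hx0 (hn x hx).1, hp, hu⟩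
    obtain ⟨x, rfl⟩ := List.length_eq_one_iff.mp hlen
    exact ⟨x, by simp, by simpa using hr⟩
  exact ⟨⟨h12, h21⟩, ⟨h23, h32⟩, ⟨h34, h43⟩⟩
end

section
/- Let R be a commutative ring with 1 and τ a symmetric relation on R^#. If a is τ-very strongly irreducible and a' ≈ a, then a' is τ-very strongly irreducible. -/
universe u

variable {R : Type u} [CommRing R]

/-- A strong associate of a τ-very strongly irreducible element is
τ-very strongly irreducible. -/
theorem tauVSIrreducible_of_strong_associate (τ : R → R → Prop)
    (hτ : ∀ a b : R, τ a b → IsNnu a ∧ IsNnu b)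
    (hsym : ∀ a b : R, τ a b → τ b a)
    (a a' : R) (ha : TauVSIrreducible τ a) (haa' : RSAssoc a' a) :
    TauVSIrreducible τ a' := by
  obtain ⟨lam, rfl⟩ := haa'
  obtain ⟨hnu, ⟨_, hvs⟩, hlen⟩ := ha
  refine ⟨fun h => hnu ?_, ⟨rfl, ?_⟩, fun u l hf => ?_⟩
  · exact (isUnit_of_mul_isUnit_right h)
  · rcases hvs with ⟨h0, -⟩ | hvs
    · exact Or.inl ⟨by simp [h0], by simp [h0]⟩
    · refine Or.inr fun r hr => hvs r ?_
      have h2 := congrArg (fun x => ((lam⁻¹ : Rˣ) : R) * x) hr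
      simpa [mul_comm, mul_left_comm, mul_assoc] using h2
  · obtain ⟨h1, h2, h3, h4, h5⟩ := hf
    exact hlen (lam⁻¹ * u) l ⟨h1, h2, h3, h4, by
      have : a = (lam⁻¹ : Rˣ) * ((lam : R) * a) := by simp
      rw [this, h5]; simp [mul_comm, mul_left_comm, mul_assoc]⟩
end

section
/- Let R be a commutative ring with 1, τ a symmetric relation on R^#, and a ∈ R a nonunit. Then: (1) if a is τ-very strongly irreducible, then a is τ-m-irreducible; (2) if R is a strongly associate ring and a is τ-m-irreducible, then a is τ-strongly irreducible; (3) if a is τ-strongly irreducible, then a is τ-irreducible; (4) if a is τ-very strongly irreducible, then a is τ-strongly irreducible; (5) if a is τ-m-irreducible, then a is τ-irreducible. -/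
universe u

variable {R : Type u} [CommRing R]

lemma rsassoc_rassoc {R : Type u} [CommRing R] {a b : R} (h : RSAssoc a b) : RAssoc a b := by
  obtain ⟨u, rfl⟩ := h
  apply le_antisymm <;> rw [Ideal.span_singleton_le_span_singleton]
  · exact ⟨u, mul_comm _ _⟩
  · exact ⟨(u⁻¹ : Rˣ), by simp [mul_comm]⟩

lemma vs_len_one {R : Type u} [CommRing R] {τ : R → R → Prop} {a : R} {u : Rˣ} {l : List R}
    (hvs : TauVSIrreducible τ a) (hf : IsTauFact τ u l a) :
    ∃ x, l = [x] ∧ RSAssoc a x := by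
  obtain ⟨_, _, hlen⟩ := hvs
  have h1 := hlen u l hf
  obtain ⟨x, rfl⟩ : ∃ x, l = [x] := by
    cases l with
    | nil => simp at h1
    | cons y t => cases t with
      | nil => exact ⟨y, rfl⟩
      | cons z t2 => simp at h1
  exact ⟨x, rfl, ⟨u, by simpa using hf.2.2.2.2⟩⟩

/-- For a nonunit `a`:
(1) τ-very strongly irreducible ⇒ τ-m-irreducible;
(2) if `R` is strongly associate, τ-m-irreducible ⇒ τ-strongly irreducible;
(3) τ-strongly irreducible ⇒ τ-irreducible;
(4) τ-very strongly irreducible ⇒ τ-strongly irreducible;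
(5) τ-m-irreducible ⇒ τ-irreducible. -/
theorem tau_irreducibles_implications (τ : R → R → Prop)
    (hτ : ∀ a b : R, τ a b → IsNnu a ∧ IsNnu b)
    (hsym : ∀ a b : R, τ a b → τ b a)
    (a : R) (ha : ¬IsUnit a) :
    (TauVSIrreducible τ a → TauMIrreducible τ a) ∧
    ((∀ x y : R, RAssoc x y → RSAssoc x y) →
      TauMIrreducible τ a → TauSIrreducible τ a) ∧
    (TauSIrreducible τ a → TauIrreducible τ a) ∧
    (TauVSIrreducible τ a → TauSIrreducible τ a) ∧
    (TauMIrreducible τ a → TauIrreducible τ a) := by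
  refine ⟨?_, ?_, ?_, ?_, ?_⟩
  · intro hvs
    refine ⟨ha, fun u l hf x hx => ?_⟩
    obtain ⟨y, rfl, hy⟩ := vs_len_one hvs hf
    simp at hx
    subst hx
    exact rsassoc_rassoc hy
  · intro hsa hm
    refine ⟨ha, fun u l hf => ?_⟩
    obtain ⟨x, hx⟩ := List.exists_mem_of_ne_nil l hf.1
    exact ⟨x, hx, hsa _ _ (hm.2 u l hf x hx)⟩
  · intro hs
    refine ⟨ha, fun u l hf => ?_⟩
    obtain ⟨x, hx, h⟩ := hs.2 u l hf
    exact ⟨x, hx, rsassoc_rassoc h⟩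
  · intro hvs
    refine ⟨ha, fun u l hf => ?_⟩
    obtain ⟨y, rfl, hy⟩ := vs_len_one hvs hf
    exact ⟨y, by simp, hy⟩
  · intro hm
    refine ⟨ha, fun u l hf => ?_⟩
    obtain ⟨x, hx⟩ := List.exists_mem_of_ne_nil l hf.1
    exact ⟨x, hx, hm.2 u l hf x hx⟩
end

section
/- Let R be a présimplifiable commutative ring with 1 and τ a symmetric relation on R^#. Then for a nonunit a ∈ R, the notions τ-irreducible, τ-strongly irreducible, τ-m-irreducible, and τ-very strongly irreducible are all equivalent. -/
universe u

variable {R : Type u} [CommRing R]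

lemma rassoc_unit_mul (u : Rˣ) (x : R) : RAssoc ((u : R) * x) x := by
  unfold RAssoc
  apply le_antisymm
  · rw [Ideal.span_singleton_le_span_singleton]
    exact ⟨(u : R), mul_comm _ _⟩
  · rw [Ideal.span_singleton_le_span_singleton]
    exact ⟨((u⁻¹ : Rˣ) : R), by rw [mul_comm (u : R) x, mul_assoc]; simp⟩

lemma rassoc_to_rsassoc (hpre : ∀ x y : R, x * y = x → x = 0 ∨ IsUnit y)
    {a b : R} (h : RAssoc a b) : RSAssoc a b := by
  have hba : b ∣ a := Ideal.span_singleton_le_span_singleton.mp h.le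
  have hab : a ∣ b := Ideal.span_singleton_le_span_singleton.mp h.ge
  obtain ⟨r, hr⟩ := hba
  obtain ⟨s, hs⟩ := hab
  have hx : a * (s * r) = a := by rw [← mul_assoc, ← hs, ← hr]
  rcases hpre a (s * r) hx with h0 | hu
  · subst h0
    have hb0 : b = 0 := by simpa using hs
    exact ⟨1, by simp [hb0]⟩
  · have hr' : IsUnit r := isUnit_of_mul_isUnit_right hu
    obtain ⟨ru, hru⟩ := hr'
    exact ⟨ru, by rw [hr, hru, mul_comm]⟩

lemma rvsassoc_self (hpre : ∀ x y : R, x * y = x → x = 0 ∨ IsUnit y)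
    (a : R) : RVSAssoc a a := by
  refine ⟨rfl, ?_⟩
  by_cases h0 : a = 0
  · exact Or.inl ⟨h0, h0⟩
  · refine Or.inr fun r hr => ?_
    rcases hpre a r (by rw [mul_comm]; exact hr.symm) with h | h
    · exact absurd h h0
    · exact h

/-- In a présimplifiable ring, the four notions of τ-irreducibility coincide. -/
theorem tau_irreducibles_equiv_of_presimplifiable (τ : R → R → Prop)
    (hτ : ∀ a b : R, τ a b → IsNnu a ∧ IsNnu b)
    (hsym : ∀ a b : R, τ a b → τ b a)
    (hpre : ∀ x y : R, x * y = x → x = 0 ∨ IsUnit y)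
    (a : R) (ha : ¬IsUnit a) :
    (TauIrreducible τ a ↔ TauSIrreducible τ a) ∧
    (TauSIrreducible τ a ↔ TauMIrreducible τ a) ∧
    (TauMIrreducible τ a ↔ TauVSIrreducible τ a) := by
  classical
  have i2vs : TauIrreducible τ a → TauVSIrreducible τ a := by
    rintro ⟨-, hirr⟩
    refine ⟨ha, rvsassoc_self hpre a, ?_⟩
    intro u l hf
    obtain ⟨x, hx, hax⟩ := hirr u l hf
    obtain ⟨hne, hnu, hz, hpw, hprod⟩ := hf
    by_contra hlen
    have hax' : a ∣ x := Ideal.span_singleton_le_span_singleton.mp hax.ge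
    obtain ⟨s, hs⟩ := hax'
    obtain ⟨P, hPdef⟩ : ∃ P, (l.erase x).prod = P := ⟨_, rfl⟩
    have hpe : x * P = l.prod := by rw [← hPdef]; exact List.prod_erase hx
    have hP : a * ((s * (u : R)) * P) = a := by
      conv_rhs => rw [hprod, ← hpe, hs]
      ring
    rcases hpre _ _ hP with h0 | hu
    · have hb : Ideal.span ({x} : Set R) = ⊥ := by
        rw [← hax, h0, Ideal.span_singleton_eq_bot]
      have hx0 : x = 0 := Ideal.span_singleton_eq_bot.mp hb
      have : l = [0] := hz x hx hx0
      rw [this] at hlen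
      exact hlen rfl
    · have hPu : IsUnit (l.erase x).prod := hPdef ▸ isUnit_of_mul_isUnit_right hu
      have hlpos : 0 < l.length := List.length_pos_iff.mpr hne
      have hel : (l.erase x).length = l.length - 1 := List.length_erase_of_mem hx
      have hene : l.erase x ≠ [] := by
        intro h
        rw [h] at hel
        simp at hel
        omega
      obtain ⟨y, hy⟩ := List.exists_mem_of_ne_nil _ hene
      have : IsUnit y := isUnit_of_dvd_unit (List.dvd_prod hy) hPu
      exact hnu y (List.mem_of_mem_erase hy) this
  have vs2m : TauVSIrreducible τ a → TauMIrreducible τ a := by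
    rintro ⟨-, -, hvs⟩
    refine ⟨ha, ?_⟩
    intro u l hf x hx
    obtain ⟨y, hy⟩ := List.length_eq_one_iff.mp (hvs u l hf)
    subst hy
    simp only [List.mem_singleton] at hx
    subst hx
    have hp : a = (u : R) * x := by simpa using hf.2.2.2.2
    rw [hp]
    exact rassoc_unit_mul u x
  have m2s : TauMIrreducible τ a → TauSIrreducible τ a := by
    rintro ⟨-, hm⟩
    refine ⟨ha, fun u l hf => ?_⟩
    obtain ⟨x, hx⟩ := List.exists_mem_of_ne_nil l hf.1
    exact ⟨x, hx, rassoc_to_rsassoc hpre (hm u l hf x hx)⟩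
  have s2i : TauSIrreducible τ a → TauIrreducible τ a := by
    rintro ⟨-, hs⟩
    refine ⟨ha, fun u l hf => ?_⟩
    obtain ⟨x, hx, lam, hlam⟩ := hs u l hf
    exact ⟨x, hx, by rw [hlam]; exact rassoc_unit_mul lam x⟩
  refine ⟨⟨fun h => m2s (vs2m (i2vs h)), s2i⟩,
    ⟨fun h => vs2m (i2vs (s2i h)), m2s⟩,
    ⟨fun h => i2vs (s2i (m2s h)), vs2m⟩⟩
end

section
/- Let R be a commutative ring with 1 and τ a symmetric relation on R^# that is refinable and associate preserving. If R is a τ-atomic-HFR (R is τ-atomic and any two τ-atomic factorizations of a nonunit have the same length), then R is a τ-BFR (for every nonunit a there is N(a) ∈ ℕ such that every τ-factorization of a has length at most N(a)). -/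
universe u

variable {R : Type u} [CommRing R]

theorem List.Forall₂.length_le_length_flatten {α β : Type*} {l : List α} {M : List (List β)}
    (h : List.Forall₂ (fun _ m => m ≠ []) l M) : l.length ≤ M.flatten.length := by
  induction h with
  | nil => simp
  | cons hm _ ih =>
    simp only [List.length_cons, List.flatten_cons, List.length_append]
    have := List.length_pos_iff.mpr hm
    omega

section

variable {τ : R → R → Prop}

theorem TauAtomic.exists_forall₂_atomic (hatomic : TauAtomic τ) :
    ∀ {l : List R}, (∀ x ∈ l, ¬IsUnit x) → ∃ L : List (Rˣ × List R),
      List.Forall₂ (fun x p => IsTauFact τ p.1 p.2 x) l L ∧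
      ∀ p ∈ L, ∀ y ∈ p.2, TauIrreducible τ y
  | [], _ => ⟨[], .nil, by simp⟩
  | x :: xs, h => by
    obtain ⟨L, hL, hLirr⟩ := hatomic.exists_forall₂_atomic fun y hy => h y (List.mem_cons_of_mem x hy)
    obtain ⟨ux, lx, hx, hxirr⟩ := hatomic x (h x List.mem_cons_self)
    refine ⟨(ux, lx) :: L, .cons hx hL, ?_⟩
    rintro p (_ | ⟨_, hp⟩)
    exacts [hxirr, hLirr p hp]

/-- Refining every factor into τ-atoms can only lengthen a τ-factorization. -/
theorem TauRefinable.exists_atomic_fact_length_le (href : TauRefinable τ)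
    (hatomic : TauAtomic τ) {a : R} {u : Rˣ} {l : List R} (hfact : IsTauFact τ u l a) :
    ∃ (u' : Rˣ) (l' : List R), IsTauFact τ u' l' a ∧ (∀ x ∈ l', TauIrreducible τ x) ∧
      l.length ≤ l'.length := by
  obtain ⟨L, hL, hLirr⟩ := hatomic.exists_forall₂_atomic hfact.2.1
  refine ⟨_, _, href a u l hfact L hL, ?_, ?_⟩
  · simp only [List.mem_flatten, List.mem_map]
    rintro x ⟨_, ⟨p, hp, rfl⟩, hx⟩
    exact hLirr p hp x hx
  · exact (List.forall₂_map_right_iff.mpr (hL.imp fun _ _ hx => hx.1)).length_le_length_flatten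

end

theorem tau_HFR_implies_BFR_general (τ : R → R → Prop)
    (href : TauRefinable τ)
    (hatomic : TauAtomic τ)
    (hhfr : ∀ a : R, ¬IsUnit a → ∀ (u u' : Rˣ) (l l' : List R),
      IsTauFact τ u l a → (∀ x ∈ l, TauIrreducible τ x) →
      IsTauFact τ u' l' a → (∀ x ∈ l', TauIrreducible τ x) →
      l.length = l'.length) :
    ∀ a : R, ¬IsUnit a → ∃ N : ℕ, ∀ (u : Rˣ) (l : List R),
      IsTauFact τ u l a → l.length ≤ N := by
  intro a ha
  obtain ⟨u₀, l₀, hfact₀, hirr₀⟩ := hatomic a ha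
  refine ⟨l₀.length, fun u l hfact => ?_⟩
  obtain ⟨u', l', hfact', hirr', hle⟩ := href.exists_atomic_fact_length_le hatomic hfact
  exact hle.trans (hhfr a ha u₀ u' l₀ l' hfact₀ hirr₀ hfact' hirr').ge

/-- For `τ` refinable and associate preserving: if `R` is a τ-atomic-HFR
(τ-atomic, and any two τ-atomic factorizations of a nonunit have the same length),
then `R` is a τ-BFR. -/
theorem tau_HFR_implies_BFR (τ : R → R → Prop)
    (hτ : ∀ a b : R, τ a b → IsNnu a ∧ IsNnu b)
    (hsym : ∀ a b : R, τ a b → τ b a)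
    (href : TauRefinable τ) (hap : TauAssocPreserving τ)
    (hatomic : TauAtomic τ)
    (hhfr : ∀ a : R, ¬IsUnit a → ∀ (u u' : Rˣ) (l l' : List R),
      IsTauFact τ u l a → (∀ x ∈ l, TauIrreducible τ x) →
      IsTauFact τ u' l' a → (∀ x ∈ l', TauIrreducible τ x) →
      l.length = l'.length) :
    ∀ a : R, ¬IsUnit a → ∃ N : ℕ, ∀ (u : Rˣ) (l : List R),
      IsTauFact τ u l a → l.length ≤ N :=
  tau_HFR_implies_BFR_general τ href hatomic hhfr
end

section
/- Let R be a commutative ring with 1 and τ a symmetric relation on R^# that is refinable and associate preserving. If R is a τ-atomic-associate-UFR, then R is a τ-associate-FFR (every nonunit has only finitely many nontrivial τ-factorizations up to rearrangement and associates of the factors). -/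
universe u

variable {R : Type u} [CommRing R]

/-!
Fix a τ-atomic factorization `a = u₀ p₁ ⋯ pₙ`. Refining an arbitrary τ-factorization
`a = u x₁ ⋯ x_k` by τ-atomic factorizations of the `xᵢ` gives, by refinability, a τ-atomic
factorization of `a`, which by uniqueness matches `p₁, …, pₙ` up to associates. Hence `k ≤ n`
and each `xᵢ` is associate to the product of a sub-multiset of `{p₁, …, pₙ}`, so up to
associates the factors of `u x₁ ⋯ x_k` form one of the finitely many multisets of at most `n`
such subproducts.
-/

theorem Multiset.le_nsmul_of_subset_of_card_le {α : Type*} {s t : Multiset α} {n : ℕ}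
    (hst : s ⊆ t) (hn : Multiset.card s ≤ n) : s ≤ n • t := by
  classical
  refine Multiset.le_iff_count.2 fun x => ?_
  by_cases hx : x ∈ s
  · calc Multiset.count x s ≤ Multiset.card s := Multiset.count_le_card x s
      _ ≤ n := hn
      _ ≤ n * Multiset.count x t := Nat.le_mul_of_pos_right n (Multiset.count_pos.2 (hst hx))
      _ = Multiset.count x (n • t) := (Multiset.count_nsmul x n t).symm
  · simp [Multiset.count_eq_zero_of_notMem hx]

theorem List.length_le_length_flatMap {α β : Type*} {l : List α} {f : α → List β}
    (hf : ∀ x ∈ l, f x ≠ []) : l.length ≤ (l.flatMap f).length := by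
  rw [List.length_flatMap]
  calc l.length = (l.map fun x => (f x).length).length := (List.length_map _).symm
    _ ≤ (l.map fun x => (f x).length).sum := List.length_le_sum_of_one_le _ <| by
      simpa [Nat.one_le_iff_ne_zero] using hf

theorem RAssoc.mul {a b c d : R} (hab : RAssoc a b) (hcd : RAssoc c d) :
    RAssoc (a * c) (b * d) := by
  unfold RAssoc at *
  rw [← Ideal.span_singleton_mul_span_singleton, ← Ideal.span_singleton_mul_span_singleton,
    hab, hcd]

theorem Multiset.Rel.rassoc_prod {m n : Multiset R} (h : Multiset.Rel RAssoc m n) :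
    RAssoc m.prod n.prod := by
  induction h with
  | zero => rfl
  | cons hab _ ih => simpa only [Multiset.prod_cons] using hab.mul ih

theorem Multiset.Rel.exists_le_rassoc_prod {m n m' : Multiset R} (h : Multiset.Rel RAssoc m n)
    (hm' : m' ≤ m) : ∃ n' ≤ n, RAssoc m'.prod n'.prod := by
  obtain ⟨d, rfl⟩ := Multiset.le_iff_exists_add.1 hm'
  obtain ⟨n', n'', hrel, -, rfl⟩ := Multiset.rel_add_left.1 h
  exact ⟨n', Multiset.le_add_right n' n'', hrel.rassoc_prod⟩

theorem exists_rel_le_nsmul_subproducts_of_rel_flatMap {l : List R} {f : R → List R}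
    {m₀ : Multiset R} (hf : ∀ x ∈ l, RAssoc x (f x).prod ∧ f x ≠ [])
    (hrel : Multiset.Rel RAssoc (l.flatMap f : Multiset R) m₀) :
    ∃ s ≤ Multiset.card m₀ • m₀.powerset.map Multiset.prod,
      Multiset.Rel RAssoc (l : Multiset R) s := by
  have hlen : l.length ≤ Multiset.card m₀ := by
    simpa using (List.length_le_length_flatMap fun x hx => (hf x hx).2).trans_eq
      (Multiset.card_eq_card_of_rel hrel)
  have hsub (x) (hx : x ∈ l) : ∃ m ≤ m₀, RAssoc x m.prod := by
    have hsublist : (f x).Sublist (l.flatMap f) := by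
      rw [List.flatMap_def]
      exact List.sublist_flatten_of_mem (List.mem_map_of_mem hx)
    obtain ⟨m, hm, hassoc⟩ := hrel.exists_le_rassoc_prod (Multiset.coe_le.2 hsublist.subperm)
    rw [Multiset.prod_coe] at hassoc
    exact ⟨m, hm, (hf x hx).1.trans hassoc⟩
  choose! g hg using hsub
  refine ⟨↑(l.map fun x => (g x).prod), ?_, ?_⟩
  · refine Multiset.le_nsmul_of_subset_of_card_le (fun t ht => ?_) (by simpa using hlen)
    obtain ⟨x, hx, rfl⟩ := List.mem_map.1 ht
    exact Multiset.mem_map_of_mem _ (Multiset.mem_powerset.2 (hg x hx).1)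
  · rw [← Multiset.map_coe, Multiset.rel_map_right]
    exact Multiset.rel_refl_of_refl_on fun x hx => (hg x hx).2

section TauFactorization

variable {τ : R → R → Prop}

theorem IsTauFact.rassoc_prod {u : Rˣ} {l : List R} {a : R} (h : IsTauFact τ u l a) :
    RAssoc a l.prod := by
  rw [RAssoc, h.2.2.2.2, Ideal.span_singleton_mul_left_unit u.isUnit]

theorem IsTauFact.refine (href : TauRefinable τ) {u : Rˣ} {l : List R} {a : R}
    (hl : IsTauFact τ u l a) {v : R → Rˣ} {f : R → List R}
    (hf : ∀ x ∈ l, IsTauFact τ (v x) (f x) x) :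
    IsTauFact τ (u * (l.map v).prod) (l.flatMap f) a := by
  have := href a u l hl (l.map fun x => (v x, f x))
    (List.forall₂_map_right_iff.2 (List.forall₂_same.2 hf))
  simpa only [List.map_map, Function.comp_def, List.flatMap_def] using this

end TauFactorization

theorem tau_UFR_implies_FFR_general (τ : R → R → Prop)
    (href : TauRefinable τ)
    (hatomic : TauAtomic τ)
    (hufr : ∀ a : R, ¬IsUnit a → ∀ (u u' : Rˣ) (l l' : List R),
      IsTauFact τ u l a → (∀ x ∈ l, TauIrreducible τ x) →
      IsTauFact τ u' l' a → (∀ x ∈ l', TauIrreducible τ x) →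
      Multiset.Rel RAssoc (↑l : Multiset R) (↑l' : Multiset R)) :
    ∀ a : R, ¬IsUnit a → ∃ F : Finset (Multiset R),
      ∀ (u : Rˣ) (l : List R), IsTauFact τ u l a → 1 < l.length →
        ∃ s ∈ F, Multiset.Rel RAssoc (↑l) s := by
  classical
  intro a ha
  choose! v atoms hatoms using hatomic
  obtain ⟨hfact₀, hirr₀⟩ := hatoms a ha
  let m₀ : Multiset R := atoms a
  refine ⟨(Multiset.card m₀ • m₀.powerset.map Multiset.prod).powerset.toFinset,
    fun u l hl _ => ?_⟩
  have hpieces (x) (hx : x ∈ l) := hatoms x (hl.2.1 x hx)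
  have hirr (y) (hy : y ∈ l.flatMap atoms) : TauIrreducible τ y := by
    obtain ⟨x, hx, hy⟩ := List.mem_flatMap.1 hy
    exact (hpieces x hx).2 y hy
  have hrel : Multiset.Rel RAssoc (l.flatMap atoms : Multiset R) m₀ :=
    hufr a ha _ _ _ _ (hl.refine href fun x hx => (hpieces x hx).1) hirr hfact₀ hirr₀
  obtain ⟨s, hs, hls⟩ := exists_rel_le_nsmul_subproducts_of_rel_flatMap
    (fun x hx => ⟨(hpieces x hx).1.rassoc_prod, (hpieces x hx).1.1⟩) hrel
  exact ⟨s, Multiset.mem_toFinset.2 (Multiset.mem_powerset.2 hs), hls⟩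

/-- For `τ` refinable and associate preserving: if `R` is a τ-atomic-associate-UFR,
then `R` is a τ-associate-FFR (every nonunit has only finitely many nontrivial
τ-factorizations up to rearrangement and associates of the factors). -/
theorem tau_UFR_implies_FFR (τ : R → R → Prop)
    (hτ : ∀ a b : R, τ a b → IsNnu a ∧ IsNnu b)
    (hsym : ∀ a b : R, τ a b → τ b a)
    (href : TauRefinable τ) (hap : TauAssocPreserving τ)
    (hatomic : TauAtomic τ)
    (hufr : ∀ a : R, ¬IsUnit a → ∀ (u u' : Rˣ) (l l' : List R),
      IsTauFact τ u l a → (∀ x ∈ l, TauIrreducible τ x) →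
      IsTauFact τ u' l' a → (∀ x ∈ l', TauIrreducible τ x) →
      Multiset.Rel RAssoc (↑l : Multiset R) (↑l' : Multiset R)) :
    ∀ a : R, ¬IsUnit a → ∃ F : Finset (Multiset R),
      ∀ (u : Rˣ) (l : List R), IsTauFact τ u l a → 1 < l.length →
        ∃ s ∈ F, Multiset.Rel RAssoc (↑l) s :=
  tau_UFR_implies_FFR_general τ href hatomic hufr
end

section
/- Let R be a commutative ring with 1 and τ a symmetric relation on R^# that is refinable and associate preserving. If R is a τ-BFR, then R satisfies τ-ACCP: every ascending chain of principal ideals (a₀) ⊆ (a₁) ⊆ ⋯ with a_{i+1} |_τ a_i for all i stabilizes. -/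
universe u

variable {R : Type u} [CommRing R]

/-- The trivial τ-factorization `x = 1 * x` of a nonunit `x`. -/
lemma trivial_tau_fact (τ : R → R → Prop) {x : R} (hx : ¬IsUnit x) :
    IsTauFact τ 1 [x] x := by
  refine ⟨by simp, by simpa, ?_, by simp, by simp⟩
  intro y hy h0
  simp only [List.mem_singleton] at hy
  simp [hy ▸ h0]

lemma forall₂_trivial (τ : R → R → Prop) (l : List R) (h : ∀ x ∈ l, ¬IsUnit x) :
    List.Forall₂ (fun x (p : Rˣ × List R) => IsTauFact τ p.1 p.2 x) l
      (l.map fun x => ((1 : Rˣ), [x])) := by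
  induction l with
  | nil => simp
  | cons a t ih =>
    simp only [List.map_cons]
    exact List.Forall₂.cons (trivial_tau_fact τ (h a (by simp)))
      (ih fun x hx => h x (List.mem_cons_of_mem _ hx))

lemma flatten_map_singleton' (l : List R) :
    (l.map fun x => ([x] : List R)).flatten = l := by
  induction l <;> simp [*]

/-- Refining a single occurrence of a factor. -/
lemma refine_one {τ : R → R → Prop} (href : TauRefinable τ) {a b : R} {u v : Rˣ}
    {l m : List R} (hl : IsTauFact τ u l a) (hb : b ∈ l) (hm : IsTauFact τ v m b) :
    ∃ (u' : Rˣ) (l' : List R), IsTauFact τ u' l' a ∧ (∀ x ∈ m, x ∈ l') ∧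
      l'.length + 1 = l.length + m.length := by
  obtain ⟨l₁, l₂, rfl⟩ := List.append_of_mem hb
  have hnu : ∀ x ∈ l₁ ++ b :: l₂, ¬IsUnit x := hl.2.1
  have h1 : ∀ x ∈ l₁, ¬IsUnit x := fun x hx => hnu x (by simp [hx])
  have h2 : ∀ x ∈ l₂, ¬IsUnit x := fun x hx => hnu x (by simp [hx])
  set L : List (Rˣ × List R) :=
    (l₁.map fun x => ((1 : Rˣ), [x])) ++ (v, m) :: (l₂.map fun x => ((1 : Rˣ), [x])) with hL
  have hF : List.Forall₂ (fun x (p : Rˣ × List R) => IsTauFact τ p.1 p.2 x)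
      (l₁ ++ b :: l₂) L :=
    List.rel_append (forall₂_trivial τ l₁ h1)
      (List.Forall₂.cons hm (forall₂_trivial τ l₂ h2))
  have hfact := href a u _ hl L hF
  have hsnd : (L.map Prod.snd).flatten = l₁ ++ (m ++ l₂) := by
    simp [hL, List.map_map, Function.comp_def, flatten_map_singleton']
  rw [hsnd] at hfact
  refine ⟨_, _, hfact, fun x hx => by simp [hx], ?_⟩
  simp only [List.length_append, List.length_cons]
  omega

/-- For `τ` refinable and associate preserving: if `R` is a τ-BFR,
then `R` satisfies τ-ACCP. -/
theorem tau_BFR_implies_ACCP (τ : R → R → Prop)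
    (hτ : ∀ a b : R, τ a b → IsNnu a ∧ IsNnu b)
    (hsym : ∀ a b : R, τ a b → τ b a)
    (href : TauRefinable τ) (hap : TauAssocPreserving τ)
    (hbfr : ∀ a : R, ¬IsUnit a → ∃ N : ℕ, ∀ (u : Rˣ) (l : List R),
      IsTauFact τ u l a → l.length ≤ N) :
    TauACCP τ := by
  classical
  intro f hmono htd
  -- `f 0` is a nonunit
  have h0nu : ¬IsUnit (f 0) := by
    obtain ⟨u, l, hfact, -⟩ := htd 0
    intro hu
    obtain ⟨x, hx⟩ := List.exists_mem_of_ne_nil l hfact.1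
    have hprod : IsUnit l.prod := by
      have := hfact.2.2.2.2
      rw [this] at hu
      exact (isUnit_of_mul_isUnit_right hu)
    exact hfact.2.1 x hx (isUnit_of_dvd_unit (List.dvd_prod hx) hprod)
  -- step counter
  set s : ℕ → ℕ := fun i => ∑ j ∈ Finset.range i,
    (if Ideal.span ({f j} : Set R) = Ideal.span ({f (j+1)} : Set R) then 0 else 1) with hs
  have hs_succ : ∀ i, s (i + 1) = s i +
      (if Ideal.span ({f i} : Set R) = Ideal.span ({f (i+1)} : Set R) then 0 else 1) := by
    intro i; simp [hs, Finset.sum_range_succ]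
  have hs_mono : Monotone s := by
    intro i k hik
    exact Finset.sum_le_sum_of_subset (Finset.range_subset_range.mpr hik)
  -- main claim: long factorizations of `f 0`
  have claim : ∀ i, ∃ (u : Rˣ) (l : List R),
      IsTauFact τ u l (f 0) ∧ f i ∈ l ∧ s i + 1 ≤ l.length := by
    intro i
    induction i with
    | zero => exact ⟨1, [f 0], trivial_tau_fact τ h0nu, by simp, by simp [hs]⟩
    | succ i ih =>
      obtain ⟨u, l, hfact, hmem, hlen⟩ := ih
      obtain ⟨v, m, hm, hmem'⟩ := htd i
      obtain ⟨u', l', hfact', hsub, hlen'⟩ := refine_one href hfact hmem hm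
      refine ⟨u', l', hfact', hsub _ hmem', ?_⟩
      rw [hs_succ]
      by_cases hsp : Ideal.span ({f i} : Set R) = Ideal.span ({f (i+1)} : Set R)
      · have : 1 ≤ m.length := by
          cases m with
          | nil => exact absurd rfl hm.1
          | cons a t => simp
        rw [if_pos hsp]
        omega
      · -- strict step: m has length ≥ 2
        have hm2 : 2 ≤ m.length := by
          by_contra h
          have h1 : m.length = 1 := by
            have : m ≠ [] := hm.1
            have := List.length_pos_iff.mpr this
            omega
          obtain ⟨c, hc⟩ := List.length_eq_one_iff.mp h1
          subst hc
          simp only [List.mem_singleton] at hmem'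
          subst hmem'
          have heq : f i = (v : R) * f (i + 1) := by
            have := hm.2.2.2.2; simpa using this
          apply hsp
          apply le_antisymm (hmono i)
          rw [Ideal.span_singleton_le_span_singleton]
          refine ⟨(↑v⁻¹ : R), ?_⟩
          rw [heq, mul_comm (v : R), mul_assoc]
          simp
        simp only [if_neg hsp]
        omega
  -- bound on `s`
  obtain ⟨N, hN⟩ := hbfr (f 0) h0nu
  have hsbdd : ∀ i, s i ≤ N := by
    intro i
    obtain ⟨u, l, hfact, -, hlen⟩ := claim i
    have := hN u l hfact
    omega
  -- `s` attains its maximum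
  have hrange_ne : (Set.range s).Nonempty := ⟨s 0, ⟨0, rfl⟩⟩
  have hrange_bdd : BddAbove (Set.range s) := ⟨N, fun x ⟨i, hi⟩ => hi ▸ hsbdd i⟩
  obtain ⟨j, hj⟩ := Nat.sSup_mem hrange_ne hrange_bdd
  have hmax : ∀ i, s i ≤ s j := fun i => hj ▸ le_csSup hrange_bdd ⟨i, rfl⟩
  have hconst : ∀ i, j ≤ i → s i = s j :=
    fun i hi => le_antisymm (hmax i) (hs_mono hi)
  refine ⟨j, ?_⟩
  intro i hi
  induction i, hi using Nat.le_induction with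
  | base => rfl
  | succ i hi ih =>
    have h1 : s (i + 1) = s i := by rw [hconst _ hi, hconst _ (Nat.le_succ_of_le hi)]
    rw [hs_succ] at h1
    by_cases hsp : Ideal.span ({f i} : Set R) = Ideal.span ({f (i+1)} : Set R)
    · rw [← hsp]; exact ih
    · simp [if_neg hsp] at h1
end

section
/- Let R be a commutative ring with 1 and τ a symmetric relation on R^# that is refinable and associate preserving. If R satisfies τ-ACCP, then R is τ-atomic: every nonunit of R has a τ-factorization all of whose factors are τ-irreducible. -/
universe u

variable {R : Type u} [CommRing R]

/-- Auxiliary: `a` has a τ-factorization into τ-irreducibles. -/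
def AtomicAt (τ : R → R → Prop) (a : R) : Prop :=
  ∃ (u : Rˣ) (l : List R), IsTauFact τ u l a ∧ ∀ x ∈ l, TauIrreducible τ x

/-- The trivial τ-factorization of a nonunit. -/
theorem isTauFact_trivial (τ : R → R → Prop) {a : R} (ha : ¬IsUnit a) :
    IsTauFact τ 1 [a] a := by
  refine ⟨by simp, ?_, ?_, List.pairwise_singleton _ _, by simp⟩
  · intro x hx; rw [List.mem_singleton] at hx; subst hx; exact ha
  · intro x hx h0; rw [List.mem_singleton] at hx; subst hx; rw [h0]

/-- Key step: a non-atomic nonunit has a strictly larger non-atomic τ-divisor. -/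
theorem key_step (τ : R → R → Prop) (href : TauRefinable τ)
    {a : R} (ha : ¬IsUnit a) (hna : ¬ AtomicAt τ a) :
    ∃ b : R, (¬IsUnit b ∧ ¬ AtomicAt τ b) ∧
      Ideal.span ({a} : Set R) ≤ Ideal.span ({b} : Set R) ∧
      Ideal.span ({a} : Set R) ≠ Ideal.span ({b} : Set R) ∧
      TauDvd τ b a := by
  classical
  have hni : ¬ TauIrreducible τ a := by
    intro hirr
    exact hna ⟨1, [a], isTauFact_trivial τ ha, fun x hx => by
      rw [List.mem_singleton] at hx; exact hx ▸ hirr⟩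
  rw [TauIrreducible, not_and] at hni
  have hni' := hni ha
  push_neg at hni'
  obtain ⟨u, l, hfact, hnass⟩ := hni'
  have hex : ∃ b ∈ l, ¬ AtomicAt τ b := by
    by_contra hall
    push_neg at hall
    set G : R → Rˣ × List R := fun b =>
      if hb : AtomicAt τ b then (hb.choose, hb.choose_spec.choose) else (1, []) with hGdef
    have hG : ∀ b ∈ l, IsTauFact τ (G b).1 (G b).2 b ∧
        ∀ x ∈ (G b).2, TauIrreducible τ x := by
      intro b hb
      have hab := hall b hb
      simp only [hGdef, dif_pos hab]
      exact ⟨hab.choose_spec.choose_spec.1, hab.choose_spec.choose_spec.2⟩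
    have hF : List.Forall₂ (fun x p => IsTauFact τ p.1 p.2 x) l (l.map G) := by
      rw [List.forall₂_map_right_iff]
      exact List.forall₂_same.2 (fun x hx => (hG x hx).1)
    have hrefined := href a u l hfact (l.map G) hF
    refine hna ⟨_, _, hrefined, ?_⟩
    intro x hx
    rw [List.mem_flatten] at hx
    obtain ⟨s, hs, hxs⟩ := hx
    rw [List.mem_map] at hs
    obtain ⟨p, hp, rfl⟩ := hs
    rw [List.mem_map] at hp
    obtain ⟨b, hb, rfl⟩ := hp
    exact (hG b hb).2 x hxs
  obtain ⟨b, hb, hbna⟩ := hex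
  have hdvd : b ∣ a := by
    rw [hfact.2.2.2.2]
    exact (List.dvd_prod hb).mul_left _
  exact ⟨b, ⟨hfact.2.1 b hb, hbna⟩,
    Ideal.span_singleton_le_span_singleton.2 hdvd, hnass b hb, ⟨u, l, hfact, hb⟩⟩

/-- For `τ` refinable and associate preserving: if `R` satisfies τ-ACCP,
then `R` is τ-atomic. -/
theorem tau_ACCP_implies_atomic (τ : R → R → Prop)
    (hτ : ∀ a b : R, τ a b → IsNnu a ∧ IsNnu b)
    (hsym : ∀ a b : R, τ a b → τ b a)
    (href : TauRefinable τ) (hap : TauAssocPreserving τ)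
    (haccp : TauACCP τ) :
    TauAtomic τ := by
  classical
  by_contra h
  have h' : ∃ a : R, ¬IsUnit a ∧ ¬ AtomicAt τ a := by
    by_contra h2
    push_neg at h2
    exact h (fun a ha => h2 a ha)
  have key' : ∀ a : R, ∃ b : R, (¬IsUnit a ∧ ¬AtomicAt τ a) →
      ((¬IsUnit b ∧ ¬AtomicAt τ b) ∧
        Ideal.span ({a} : Set R) ≤ Ideal.span ({b} : Set R) ∧
        Ideal.span ({a} : Set R) ≠ Ideal.span ({b} : Set R) ∧
        TauDvd τ b a) := by
    intro a
    by_cases hb : ¬IsUnit a ∧ ¬AtomicAt τ a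
    · obtain ⟨b, hbspec⟩ := key_step τ href hb.1 hb.2
      exact ⟨b, fun _ => hbspec⟩
    · exact ⟨a, fun h'' => absurd h'' hb⟩
  choose nxt hnxt using key'
  obtain ⟨a₀, hba₀⟩ := h'
  set f : ℕ → R := fun n => nxt^[n] a₀ with hf
  have hstep : ∀ i, f (i + 1) = nxt (f i) := fun i =>
    Function.iterate_succ_apply' nxt i a₀
  have hbadf : ∀ n, ¬IsUnit (f n) ∧ ¬AtomicAt τ (f n) := by
    intro n
    induction n with
    | zero => exact hba₀
    | succ n ih =>
      rw [hstep]
      exact (hnxt (f n) ih).1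
  obtain ⟨N, hN⟩ := haccp f
    (fun i => by rw [hstep]; exact (hnxt (f i) (hbadf i)).2.1)
    (fun i => by rw [hstep]; exact (hnxt (f i) (hbadf i)).2.2.2)
  have heq := hN (N + 1) (Nat.le_succ N)
  rw [hstep] at heq
  exact (hnxt (f N) (hbadf N)).2.2.1 heq.symm
end

section
/- Let R be a commutative ring with 1 and define a τ_z b iff ab = 0 on R^#. The following are equivalent: (1) R is an integral domain or R is finite; (2) for every nonunit a ∈ R, there are only finitely many elements of R that occur as a factor in some nontrivial τ_z-factorization of a (R is a strong-τ_z-WFFR). -/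
universe u

variable {R : Type u} [CommRing R]

/-- For the relation `a τ_z b ↔ a * b = 0`, the following are equivalent:
(1) `R` is an integral domain or `R` is finite;
(2) `R` is a strong-τ_z-WFFR: for every nonunit `a`, only finitely many elements of
`R` occur as a factor in some nontrivial τ_z-factorization of `a`. -/
theorem tauZ_strong_WFFR_iff :
    (IsDomain R ∨ Finite R) ↔
      ∀ a : R, ¬IsUnit a →
        {b : R | ∃ (u : Rˣ) (l : List R),
          IsTauFact (fun x y : R => x * y = 0) u l a ∧ 1 < l.length ∧ b ∈ l}.Finite := by
  constructor
  · rintro (hD | hF)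
    · intro a ha
      convert Set.finite_empty
      ext b
      simp only [Set.mem_setOf_eq, Set.mem_empty_iff_false, iff_false]
      rintro ⟨u, l, ⟨hne, hnu, hz, hpw, heq⟩, hlen, hb⟩
      match l, hlen, hz, hpw with
      | x :: y :: rest, _, hz, hpw =>
        have hxy : x * y = 0 := (List.pairwise_cons.mp hpw).1 y (by simp)
        have hx0 : x ≠ 0 := fun h => by
          have := hz x (by simp) h; simp at this
        have hy0 : y ≠ 0 := fun h => by
          have := hz y (by simp) h; simp at this
        rcases mul_eq_zero.mp hxy with h | h
        · exact hx0 h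
        · exact hy0 h
    · intro a ha
      exact Set.toFinite _
  · intro h
    by_cases hF : Finite R
    · exact Or.inr hF
    left
    have hnt : Nontrivial R := by
      by_contra hs
      have : Subsingleton R := not_nontrivial_iff_subsingleton.mp hs
      exact hF (Finite.of_subsingleton)
    have hnzd : NoZeroDivisors R := by
      constructor
      intro a b hab
      by_contra hcon
      push_neg at hcon
      obtain ⟨ha0, hb0⟩ := hcon
      -- Z : set of zero divisors (including 0)
      set Z : Set R := {z : R | ∃ y : R, y ≠ 0 ∧ z * y = 0} with hZdef
      -- the set of nontrivial τ_z-factors of 0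
      have hS := h 0 (not_isUnit_zero)
      -- Z is finite: every nonzero element of Z is a factor of 0
      have hZfin : Z.Finite := by
        apply Set.Finite.subset (hS.union (Set.finite_singleton 0))
        rintro z ⟨y, hy0, hzy⟩
        by_cases hz0 : z = 0
        · exact Or.inr (by simp [hz0])
        left
        have hznu : ¬IsUnit z := fun hu => hy0 ((IsUnit.mul_right_eq_zero hu).mp hzy)
        have hynu : ¬IsUnit y := fun hu => hz0 ((IsUnit.mul_left_eq_zero hu).mp hzy)
        refine ⟨1, [z, y], ⟨by simp, ?_, ?_, ?_, ?_⟩, by simp, by simp⟩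
        · intro x hx
          rcases (by simpa using hx : x = z ∨ x = y) with rfl | rfl
          · exact hznu
          · exact hynu
        · intro x hx hx0
          rcases (by simpa using hx : x = z ∨ x = y) with rfl | rfl
          · exact absurd hx0 hz0
          · exact absurd hx0 hy0
        · simp [hzy]
        · simp [hzy]
      -- but then R is finite, contradiction
      apply hF
      rw [← Set.finite_univ_iff]
      have hcover : (Set.univ : Set R) ⊆ ⋃ z ∈ Z, {r : R | r * a = z} := by
        intro r _
        refine Set.mem_biUnion ?_ (by simp : r ∈ {r' : R | r' * a = r * a})
        exact ⟨b, hb0, by rw [mul_assoc, hab, mul_zero]⟩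
      refine Set.Finite.subset (Set.Finite.biUnion hZfin ?_) hcover
      intro z _
      by_cases hne : ({r : R | r * a = z} : Set R).Nonempty
      · obtain ⟨r0, hr0⟩ := hne
        have hann : ({x : R | x * a = 0} : Set R).Finite := by
          apply hZfin.subset
          intro x hx
          exact ⟨a, ha0, hx⟩
        apply Set.Finite.subset (hann.image (fun x => r0 + x))
        intro r hr
        refine ⟨r - r0, ?_, by ring⟩
        simp only [Set.mem_setOf_eq] at hr hr0 ⊢
        rw [sub_mul, hr, hr0, sub_self]
      · rw [Set.not_nonempty_iff_eq_empty] at hne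
        rw [hne]
        exact Set.finite_empty
    exact NoZeroDivisors.to_isDomain R
end

section
/- Let R be a commutative ring with 1 and define a τ_z b iff ab = 0 on R^#. The following are equivalent: (1) R is a strong-τ_z-FFR, i.e., every nonunit of R has only finitely many nontrivial τ_z-factorizations up to rearrangement of the factors; (2) R is an integral domain, or R is finite and reduced; (3) R is an integral domain, or R is isomorphic to a direct product K₁ × ⋯ × Kₙ of finite fields with n ≥ 2. -/
/-!
A nontrivial τ_z-factorization of `0` is just a list of at least two nonzero elements with
pairwise zero products. A nonzero `y` with `y² = 0` gives such factorizations `y ⋯ y` of every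
length. In an infinite ring with `ab = 0`, `a, b ≠ 0`, one of the annihilators of `a` and `b`
is infinite, since `aR ⊆ ann(b)` and `R/ann(a) ≅ aR`; this gives infinitely many
factorizations `0 = a x`. Conversely, in a domain there are no nontrivial τ_z-factorizations,
and in a reduced ring the factors of one are distinct, so a finite reduced ring has only
finitely many. Finally, a finite reduced ring is Artinian, hence a finite product of fields,
with at least two factors unless it is a domain.
-/

universe u

variable {R : Type u} [CommRing R]

def nontrivialTauZFactorizations (a : R) : Set (Multiset R) :=
  {s | ∃ (v : Rˣ) (l : List R), IsTauFact (fun x y : R => x * y = 0) v l a ∧ 1 < l.length ∧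
    (↑l : Multiset R) = s}

lemma IsTauFact.ne_zero_of_one_lt_length {τ : R → R → Prop} {u : Rˣ} {l : List R} {a : R}
    (h : IsTauFact τ u l a) (hl : 1 < l.length) : ∀ x ∈ l, x ≠ 0 := by
  intro x hx hx0
  rw [h.2.2.1 x hx hx0] at hl
  simp at hl

lemma isTauFact_zero_of_pairwise {l : List R} (hl : 1 < l.length) (hne : ∀ x ∈ l, x ≠ 0)
    (hpw : l.Pairwise fun x y => x * y = 0) : IsTauFact (fun x y : R => x * y = 0) 1 l 0 := by
  obtain _ | ⟨a, _ | ⟨b, t⟩⟩ := l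
  · simp at hl
  · simp at hl
  have hab : a * b = 0 := (List.pairwise_cons.mp hpw).1 b (by simp)
  refine ⟨List.cons_ne_nil _ _, fun x hx hu => ?_, fun x hx hx0 => absurd hx0 (hne x hx), hpw,
    by simp [← mul_assoc, hab]⟩
  rcases List.mem_cons.mp hx with rfl | hx
  · exact hne b (by simp) (hu.mul_right_eq_zero.mp hab)
  · exact hne a (by simp) (hu.mul_right_eq_zero.mp
      (by rw [mul_comm]; exact (List.pairwise_cons.mp hpw).1 x hx))

lemma infinite_nontrivialTauZFactorizations_zero_of_mul_self_eq_zero {y : R} (hy : y ≠ 0)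
    (hyy : y * y = 0) : (nontrivialTauZFactorizations (0 : R)).Infinite := by
  refine Set.infinite_of_injective_forall_mem
    (f := fun n : ℕ => (↑(List.replicate (n + 2) y) : Multiset R)) (fun m n h => ?_) fun n => ?_
  · simpa using congrArg Multiset.card h
  · have hlen : 1 < (List.replicate (n + 2) y).length := by simp
    refine ⟨1, _, isTauFact_zero_of_pairwise hlen ?_ ?_, hlen, rfl⟩
    · exact fun x hx => (List.eq_of_mem_replicate hx) ▸ hy
    · exact List.pairwise_replicate.mpr (Or.inr hyy)

lemma infinite_nontrivialTauZFactorizations_zero_of_infinite_annihilator {a : R} (ha : a ≠ 0)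
    (h : {x : R | a * x = 0}.Infinite) : (nontrivialTauZFactorizations (0 : R)).Infinite := by
  have hinj : Set.InjOn (fun x : R => (↑[a, x] : Multiset R)) ({x | a * x = 0} \ {0}) :=
    fun p _ q _ hpq => by simpa using hpq
  refine ((h.sdiff (Set.finite_singleton 0)).image hinj).mono ?_
  rintro _ ⟨x, ⟨hax, hx⟩, rfl⟩
  have hlen : 1 < [a, x].length := by simp
  refine ⟨1, [a, x], isTauFact_zero_of_pairwise hlen ?_ (by simpa using hax), hlen, rfl⟩
  simp_all

lemma AddMonoidHom.finite_of_finite_ker_of_finite_range {G H : Type*} [AddGroup G] [AddGroup H]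
    (f : G →+ H) [Finite f.ker] [Finite f.range] : Finite G :=
  have : Finite (G ⧸ f.ker) := .of_equiv _ (QuotientAddGroup.quotientKerEquivRange f).symm.toEquiv
  Finite.of_addSubgroup_quotient f.ker

lemma infinite_annihilator_or_infinite_annihilator [Infinite R] {a b : R} (hab : a * b = 0) :
    {x : R | a * x = 0}.Infinite ∨ {x : R | b * x = 0}.Infinite := by
  by_contra! h
  obtain ⟨ha, hb⟩ := h
  let f : R →+ R := AddMonoidHom.mulLeft a
  have : Finite f.ker := ha.to_subtype
  have : Finite f.range := (hb.subset (by
    rintro _ ⟨c, rfl⟩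
    simp [f, ← mul_assoc, mul_comm b a, hab])).to_subtype
  have := AddMonoidHom.finite_of_finite_ker_of_finite_range f
  exact not_finite R

lemma exists_mul_eq_zero_of_not_isDomain [Nontrivial R] (h : ¬IsDomain R) :
    ∃ a b : R, a ≠ 0 ∧ b ≠ 0 ∧ a * b = 0 := by
  by_contra! H
  exact h (@NoZeroDivisors.to_isDomain R _ _
    ⟨fun {a b} hab => or_iff_not_imp_left.mpr fun ha => by_contra fun hb => H a b ha hb hab⟩)

lemma infinite_nontrivialTauZFactorizations_zero [Nontrivial R]
    (h : ¬(IsDomain R ∨ (Finite R ∧ IsReduced R))) :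
    (nontrivialTauZFactorizations (0 : R)).Infinite := by
  obtain ⟨hdom, hfin⟩ := not_or.mp h
  by_cases hred : IsReduced R
  · have : Infinite R := not_finite_iff_infinite.mp fun hf => hfin ⟨hf, hred⟩
    obtain ⟨a, b, ha, hb, hab⟩ := exists_mul_eq_zero_of_not_isDomain hdom
    rcases infinite_annihilator_or_infinite_annihilator hab with h | h
    · exact infinite_nontrivialTauZFactorizations_zero_of_infinite_annihilator ha h
    · exact infinite_nontrivialTauZFactorizations_zero_of_infinite_annihilator hb h
  · obtain ⟨y, hyy, hy⟩ : ∃ y : R, y ^ 2 = 0 ∧ y ≠ 0 := by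
      simpa [isReduced_iff_pow_one_lt 2 one_lt_two] using hred
    exact infinite_nontrivialTauZFactorizations_zero_of_mul_self_eq_zero hy (by rwa [← sq])

lemma nontrivialTauZFactorizations_eq_empty [IsDomain R] (a : R) :
    nontrivialTauZFactorizations a = ∅ := by
  refine Set.eq_empty_of_forall_notMem ?_
  rintro _ ⟨v, l, hl, hlen, rfl⟩
  obtain _ | ⟨x, _ | ⟨y, t⟩⟩ := l
  · simp at hlen
  · simp at hlen
  have hne := hl.ne_zero_of_one_lt_length hlen
  exact mul_ne_zero (hne x (by simp)) (hne y (by simp))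
    ((List.pairwise_cons.mp hl.2.2.2.1).1 y (by simp))

lemma List.nodup_of_pairwise_mul_eq_zero [IsReduced R] {l : List R} (hne : ∀ x ∈ l, x ≠ 0)
    (hpw : l.Pairwise fun x y => x * y = 0) : l.Nodup :=
  hpw.imp_of_mem fun hx _ hxy hxx =>
    hne _ hx (IsReduced.eq_zero _ ⟨2, by simpa [sq, hxx] using hxy⟩)

lemma finite_nontrivialTauZFactorizations [Finite R] [IsReduced R] (a : R) :
    (nontrivialTauZFactorizations a).Finite := by
  refine (Set.finite_range (fun t : Finset R => t.val)).subset ?_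
  rintro _ ⟨v, l, hl, hlen, rfl⟩
  exact ⟨⟨l, List.nodup_of_pairwise_mul_eq_zero (hl.ne_zero_of_one_lt_length hlen) hl.2.2.2.1⟩,
    rfl⟩

theorem finite_nontrivialTauZFactorizations_iff [Nontrivial R] :
    (∀ a : R, ¬IsUnit a → (nontrivialTauZFactorizations a).Finite) ↔
      IsDomain R ∨ (Finite R ∧ IsReduced R) := by
  refine ⟨fun h => by_contra fun hR =>
    infinite_nontrivialTauZFactorizations_zero hR (h 0 not_isUnit_zero), ?_⟩
  rintro (_ | ⟨_, _⟩) a -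
  · simp [nontrivialTauZFactorizations_eq_empty]
  · exact finite_nontrivialTauZFactorizations a

lemma one_lt_card_of_ringEquiv_pi_domains [Nontrivial R] {ι : Type*} [Fintype ι]
    {K : ι → Type*} [∀ i, Semiring (K i)] [∀ i, IsDomain (K i)] (e : R ≃+* ∀ i, K i)
    (h : ¬IsDomain R) : 1 < Fintype.card ι := by
  by_contra! hcard
  rcases Nat.le_one_iff_eq_zero_or_eq_one.mp hcard with h0 | h1
  · have : IsEmpty ι := Fintype.card_eq_zero_iff.mp h0
    exact not_subsingleton R e.toEquiv.subsingleton
  · have : Unique ι := (Fintype.card_eq_one_iff_nonempty_unique.mp h1).some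
    exact h ((e.trans (RingEquiv.piUnique K)).toMulEquiv.isDomain _)

lemma exists_ringEquiv_pi_finite_fields [Finite R] [IsReduced R] [Nontrivial R]
    (h : ¬IsDomain R) :
    ∃ (n : ℕ) (K : Fin n → Type u) (fld : ∀ i, Field (K i)),
      letI := fld
      2 ≤ n ∧ (∀ i, Finite (K i)) ∧ Nonempty (R ≃+* ((i : Fin n) → K i)) := by
  have : Fintype (MaximalSpectrum R) := Fintype.ofFinite _
  let e := Fintype.equivFin (MaximalSpectrum R)
  let E : R ≃+* ∀ I : MaximalSpectrum R, R ⧸ I.asIdeal := (IsArtinianRing.equivPi R).toRingEquiv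
  exact ⟨_, fun i => R ⧸ (e.symm i).asIdeal, fun _ => Ideal.Quotient.field _,
    one_lt_card_of_ringEquiv_pi_domains E h,
    fun _ => .of_surjective _ Ideal.Quotient.mk_surjective,
    ⟨E.trans (RingEquiv.piCongrLeft' _ e)⟩⟩

/-- For the relation `a τ_z b ↔ a * b = 0`, the following are equivalent:
(1) `R` is a strong-τ_z-FFR: every nonunit has only finitely many nontrivial
    τ_z-factorizations up to rearrangement of the factors;
(2) `R` is an integral domain, or `R` is finite and reduced;
(3) `R` is an integral domain, or `R` is isomorphic to a direct product
    `K₁ × ⋯ × Kₙ` of finite fields with `n ≥ 2`. -/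
theorem tauZ_strong_FFR_iff {R : Type u} [CommRing R] [Nontrivial R] :
    ((∀ a : R, ¬IsUnit a →
        {s : Multiset R | ∃ (v : Rˣ) (l : List R),
          IsTauFact (fun x y : R => x * y = 0) v l a ∧ 1 < l.length ∧
            (↑l : Multiset R) = s}.Finite) ↔
      (IsDomain R ∨ (Finite R ∧ IsReduced R))) ∧
    ((IsDomain R ∨ (Finite R ∧ IsReduced R)) ↔
      (IsDomain R ∨ ∃ (n : ℕ) (K : Fin n → Type u) (fld : ∀ i, Field (K i)),
        letI := fld
        2 ≤ n ∧ (∀ i, Finite (K i)) ∧ Nonempty (R ≃+* ((i : Fin n) → K i)))) := by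
  refine ⟨finite_nontrivialTauZFactorizations_iff, ?_, ?_⟩
  · rintro (hd | ⟨_, _⟩)
    · exact .inl hd
    by_cases hd : IsDomain R
    · exact .inl hd
    · exact .inr (exists_ringEquiv_pi_finite_fields hd)
  · rintro (hd | ⟨n, K, fld, -, _, ⟨e⟩⟩)
    · exact .inl hd
    · exact .inr ⟨.of_equiv _ e.symm.toEquiv, isReduced_of_injective e.toRingHom e.injective⟩
end

section
/- Let R be a commutative ring with 1 and define a τ_z b iff ab = 0 on R^#. Then R is a τ_z-BFR (for every nonunit a there is N(a) ∈ ℕ bounding the length of every τ_z-factorization of a) if and only if R is reduced and there exists n ∈ ℕ such that every finite set of pairwise distinct nonzero elements of R whose pairwise products are all zero has at most n elements (i.e., the clique number ω(Γ(R)) of the zero-divisor graph of R is finite). -/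
universe u

variable {R : Type u} [CommRing R]

/-!
Every τ_z-factorization of length at least two factors `0`, and conversely any list of at
least two nonzero elements with pairwise zero products is a τ_z-factorization of `0` (its
entries are zero divisors, hence nonunits). So a τ_z-BFR is exactly a ring in which these
lists have bounded length. A repeated entry `x` of such a list has `x ^ 2 = 0`: bounded
length forbids the lists `[x, x, …, x]`, so `R` is reduced, and in a reduced ring the lists
are duplicate-free, i.e. cliques of `Γ(R)`.
-/

namespace List

variable {M : Type*}

theorem prod_eq_zero_of_pairwise_mul_eq_zero [MonoidWithZero M] {l : List M}
    (h2 : 2 ≤ l.length) (hl : l.Pairwise (fun x y => x * y = 0)) : l.prod = 0 := by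
  match l, h2, hl with
  | a :: b :: t, _, hl =>
    have hab : a * b = 0 := (pairwise_cons.mp hl).1 b mem_cons_self
    rw [prod_cons, prod_cons, ← mul_assoc, hab, zero_mul]

theorem Pairwise.exists_mul_eq_zero [CommMonoidWithZero M] {l : List M}
    (h2 : 2 ≤ l.length) (hl : l.Pairwise (fun x y => x * y = 0)) {x : M} (hx : x ∈ l) :
    ∃ y ∈ l, x * y = 0 := by
  match l, h2, hl with
  | a :: b :: t, _, hl =>
    obtain ⟨ha, -⟩ := pairwise_cons.mp hl
    obtain rfl | hx := mem_cons.mp hx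
    · exact ⟨b, by simp, ha b mem_cons_self⟩
    · exact ⟨a, mem_cons_self, by rw [mul_comm]; exact ha x hx⟩

theorem Pairwise.mul_eq_zero_of_ne [CommMonoidWithZero M] {l : List M}
    (hl : l.Pairwise (fun x y => x * y = 0)) {x y : M} (hx : x ∈ l) (hy : y ∈ l)
    (hxy : x ≠ y) : x * y = 0 :=
  have : Std.Symm (fun x y : M => x * y = 0) := ⟨fun a b h => by rwa [mul_comm]⟩
  hl.forall hx hy hxy

theorem Pairwise.nodup_of_mul_eq_zero [MonoidWithZero M] [IsReduced M] {l : List M}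
    (hl : l.Pairwise (fun x y => x * y = 0)) (hne : ∀ x ∈ l, x ≠ 0) : l.Nodup :=
  hl.imp_of_mem fun hx _ hxy hxx =>
    hne _ hx (IsReduced.eq_zero _ ⟨2, by rw [pow_two]; exact hxx ▸ hxy⟩)

end List

theorem isTauFact_zero_of_pairwise_mul_eq_zero {l : List R} (h2 : 2 ≤ l.length)
    (hne : ∀ x ∈ l, x ≠ 0) (hl : l.Pairwise (fun x y : R => x * y = 0)) :
    IsTauFact (fun x y : R => x * y = 0) 1 l 0 := by
  refine ⟨List.ne_nil_of_length_pos (by omega), fun x hx hunit => ?_,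
    fun x hx hx0 => absurd hx0 (hne x hx), hl, ?_⟩
  · obtain ⟨y, hy, hxy⟩ := hl.exists_mul_eq_zero h2 hx
    exact hne y hy (hunit.mul_right_eq_zero.mp hxy)
  · rw [Units.val_one, one_mul, List.prod_eq_zero_of_pairwise_mul_eq_zero h2 hl]

theorem exists_bound_isTauFact_zero
    (hBFR : ∀ a : R, ¬IsUnit a → ∃ N : ℕ, ∀ (u : Rˣ) (l : List R),
      IsTauFact (fun x y : R => x * y = 0) u l a → l.length ≤ N) :
    ∃ N : ℕ, ∀ (u : Rˣ) (l : List R),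
      IsTauFact (fun x y : R => x * y = 0) u l 0 → l.length ≤ N := by
  by_cases h0 : IsUnit (0 : R)
  · -- `R` is the zero ring, so it has no nonunits and `0` has no τ-factorizations at all.
    refine ⟨0, fun u l ⟨hne, hnu, _⟩ => ?_⟩
    obtain ⟨x, hx⟩ := List.exists_mem_of_ne_nil l hne
    exact absurd (eq_of_zero_eq_one (isUnit_zero_iff.mp h0) x 0 ▸ h0) (hnu x hx)
  · exact hBFR 0 h0

section BoundedFactorizationsOfZero

variable {N : ℕ}
  (hN : ∀ (u : Rˣ) (l : List R), IsTauFact (fun x y : R => x * y = 0) u l 0 → l.length ≤ N)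
include hN

theorem isReduced_of_bounded_isTauFact_zero : IsReduced R := by
  refine (isReduced_iff_pow_one_lt 2 one_lt_two).mpr fun x hx => ?_
  by_contra hx0
  have hsq : x * x = 0 := by rwa [← pow_two]
  have hfact := isTauFact_zero_of_pairwise_mul_eq_zero (l := List.replicate (N + 2) x)
    (by simp) (fun y hy => List.eq_of_mem_replicate hy ▸ hx0)
    (List.pairwise_replicate.mpr (Or.inr hsq))
  have := hN 1 _ hfact
  simp only [List.length_replicate] at this
  omega

theorem card_le_of_bounded_isTauFact_zero {s : Finset R} (hs0 : ∀ x ∈ s, x ≠ 0)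
    (hs : ∀ x ∈ s, ∀ y ∈ s, x ≠ y → x * y = 0) : s.card ≤ N + 1 := by
  by_contra! hcard
  have hpair : s.toList.Pairwise (fun x y : R => x * y = 0) :=
    (Finset.nodup_toList s).imp_of_mem fun hx hy hxy =>
      hs _ (Finset.mem_toList.mp hx) _ (Finset.mem_toList.mp hy) hxy
  have := hN 1 _ (isTauFact_zero_of_pairwise_mul_eq_zero (by rw [Finset.length_toList]; omega)
    (fun x hx => hs0 x (Finset.mem_toList.mp hx)) hpair)
  simp only [Finset.length_toList] at this
  omega

end BoundedFactorizationsOfZero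

theorem length_le_of_isTauFact [IsReduced R] {n : ℕ}
    (hn : ∀ s : Finset R, (∀ x ∈ s, x ≠ 0) →
      (∀ x ∈ s, ∀ y ∈ s, x ≠ y → x * y = 0) → s.card ≤ n)
    {u : Rˣ} {l : List R} {a : R} (hl : IsTauFact (fun x y : R => x * y = 0) u l a) :
    l.length ≤ max n 1 := by
  classical
  obtain ⟨-, -, hzero, hpair, -⟩ := hl
  by_cases h0 : (0 : R) ∈ l
  · simp [hzero 0 h0 rfl]
  have hne : ∀ x ∈ l, x ≠ 0 := fun x hx hx0 => h0 (hx0 ▸ hx)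
  have hcard := hn l.toFinset (fun x hx => hne x (List.mem_toFinset.mp hx))
    fun x hx y hy => hpair.mul_eq_zero_of_ne (List.mem_toFinset.mp hx) (List.mem_toFinset.mp hy)
  rw [List.toFinset_card_of_nodup (hpair.nodup_of_mul_eq_zero hne)] at hcard
  omega

/-- For the relation `a τ_z b ↔ a * b = 0`: `R` is a τ_z-BFR if and only if `R` is
reduced and the clique number of the zero-divisor graph of `R` is finite, i.e. there
is `n` such that every finite set of pairwise distinct nonzero elements of `R` whose
pairwise products are all zero has at most `n` elements. -/
theorem tauZ_BFR_iff :
    (∀ a : R, ¬IsUnit a → ∃ N : ℕ, ∀ (u : Rˣ) (l : List R),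
        IsTauFact (fun x y : R => x * y = 0) u l a → l.length ≤ N) ↔
      (IsReduced R ∧ ∃ n : ℕ, ∀ s : Finset R, (∀ x ∈ s, x ≠ 0) →
        (∀ x ∈ s, ∀ y ∈ s, x ≠ y → x * y = 0) → s.card ≤ n) := by
  constructor
  · intro hBFR
    obtain ⟨N, hN⟩ := exists_bound_isTauFact_zero hBFR
    exact ⟨isReduced_of_bounded_isTauFact_zero hN,
      N + 1, fun s hs0 hs => card_le_of_bounded_isTauFact_zero hN hs0 hs⟩
  · rintro ⟨hred, n, hn⟩ a -
    exact ⟨max n 1, fun u l hl => length_le_of_isTauFact hn hl⟩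
end
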